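/- arXiv:1602.03366 — 6 statements merged into one kernel-verified Lean document; each statement's English description precedes it below -/
import Mathlib

section
/- Let {a₁, a₂, …, a_k} ⊂ ℝ be a finite set of real numbers. Then there exist infinitely many n ∈ ℕ such that H_{4n}(a_j) > 0 for every 1 ≤ j ≤ k. -/
open Real

/-- The physicists' Hermite polynomial `H_n`, given by
`H_n(x) = 2^{n/2} He_n(√2 x)` where `He_n` is the probabilists' Hermite polynomial. -/
noncomputable def physHermite (n : ℕ) (x : ℝ) : ℝ :=
  (2 : ℝ) ^ ((n : ℝ) / 2) * Polynomial.aeval (Real.sqrt 2 * x) (Polynomial.hermite n)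

/-! Write `G(t) = e^{-t²/4} He_m(t)` and `ω = √(m + 1/2)`. Hermite's equation becomes
`G'' + ω² G = (t²/4) G`, a free oscillation with a forcing term that is small near `0`; by Grönwall,
on `[0, y]` with `y³ ≤ ω` the function `G` stays within `|He_m(0)|/3` of `He_m(0) cos(ω t)`.
For `m = 4n` we have `He_m(0) > 0`, so `He_m(y) > 0` as soon as `cos(ω y) ≥ 1/2`.
Taking `m = 4q²`, `ω` lies within `1/(8q)` of `2q`, and recurrence of `q ↦ q • (2 √2 aⱼ)ⱼ` on the
torus `(ℝ/2πℤ)ᵏ` yields infinitely many `q` for which every `2q √2 aⱼ` is close to `2πℤ`. -/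

open Polynomial Filter Set

namespace Polynomial

theorem derivative_hermite_succ (n : ℕ) :
    derivative (hermite (n + 1)) = (n + 1 : ℤ[X]) * hermite n := by
  induction n with
  | zero => simp
  | succ n ih =>
    rw [hermite_succ (n + 1), derivative_sub, derivative_mul, derivative_X, ih, derivative_mul,
      hermite_succ n]
    simp only [derivative_add, derivative_natCast, derivative_one]
    push_cast
    ring

theorem derivative_derivative_hermite (n : ℕ) :
    derivative (derivative (hermite n)) = X * derivative (hermite n) - (n : ℤ[X]) * hermite n := by
  have h := congrArg derivative (hermite_succ n)
  rw [derivative_hermite_succ, derivative_sub, derivative_mul, derivative_X] at h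
  linear_combination h

theorem aeval_neg_hermite {A : Type*} [CommRing A] (n : ℕ) (x : A) :
    aeval (-x) (hermite n) = (-1) ^ n * aeval x (hermite n) := by
  simp only [aeval_eq_sum_range, Finset.mul_sum]
  refine Finset.sum_congr rfl fun k _ => ?_
  rcases Nat.even_or_odd (n + k) with h | h
  · have : (-1 : A) ^ k = (-1) ^ n := by
      have hk : k % 2 = n % 2 := by have := Nat.even_iff.1 h; omega
      rw [neg_one_pow_eq_pow_mod_two, hk, ← neg_one_pow_eq_pow_mod_two]
    rw [neg_pow, this, mul_smul_comm]
  · simp [coeff_hermite_of_odd_add h]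

theorem aeval_zero_hermite_four_mul_pos (n : ℕ) : 0 < aeval (0 : ℝ) (hermite (4 * n)) := by
  rw [← coeff_zero_eq_aeval_zero', show 4 * n = 2 * (2 * n) + 0 by ring, coeff_hermite_explicit]
  simp [pow_mul]
  positivity

end Polynomial

theorem frequently_norm_nsmul_lt {G : Type*} [SeminormedAddCommGroup G] [CompactSpace G]
    (x : G) {ε : ℝ} (hε : 0 < ε) : ∃ᶠ q : ℕ in atTop, ‖q • x‖ < ε := by
  obtain ⟨a, -, φ, hφ, hlim⟩ :=
    isCompact_univ.tendsto_subseq (x := fun n : ℕ => n • x) fun _ => mem_univ _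
  obtain ⟨N, hN⟩ := Metric.cauchySeq_iff'.1 hlim.cauchySeq ε hε
  refine frequently_atTop.2 fun Q => ⟨φ (Q + N) - φ N, ?_, ?_⟩
  · have := hφ.add_le_nat Q N
    omega
  · have h := hN (Q + N) (by omega)
    rwa [Function.comp_apply, Function.comp_apply, dist_eq_norm, sub_eq_add_neg,
      ← sub_nsmul x (hφ.monotone (by omega))] at h

theorem half_le_cos_of_norm_coe_le {x : ℝ} (h : ‖(x : AddCircle (2 * π))‖ ≤ π / 3) :
    1 / 2 ≤ cos x := by
  rw [AddCircle.norm_eq] at h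
  rw [← cos_sub_int_mul_two_pi x (round ((2 * π)⁻¹ * x)), ← cos_abs, ← cos_pi_div_three]
  exact cos_le_cos_of_nonneg_of_le_pi (abs_nonneg _) (by linarith [pi_pos]) h

theorem mul_abs_le_gronwallBound_of_forced_oscillator {v v' f : ℝ → ℝ} {ω K ε T : ℝ}
    (hω : 0 < ω) (hK : 0 ≤ K) (hv : ∀ t, HasDerivAt v (v' t) t)
    (hv' : ∀ t, HasDerivAt v' (f t - ω ^ 2 * v t) t) (h0 : v 0 = 0) (h0' : v' 0 = 0)
    (hf : ∀ t ∈ Ico 0 T, |f t| ≤ K * (ω * |v t|) + ε) :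
    ∀ t ∈ Icc 0 T, ω * |v t| ≤ gronwallBound 0 K ε t := by
  -- `z` rotates the phase-space point `(v', ω v)` back along the free oscillation, so `‖z'‖ = |f|`.
  let rot (t : ℝ) : ℂ := Complex.exp (-(ω * Complex.I) * t)
  let z (t : ℝ) : ℂ := (v' t + ω * Complex.I * v t) * rot t
  have norm_rot (t : ℝ) : ‖rot t‖ = 1 := by
    simp [rot, Complex.norm_exp]
  have hrot (t : ℝ) : HasDerivAt rot (-(ω * Complex.I) * rot t) t := by
    refine ((hasDerivAt_id (t : ℂ)).const_mul (-(ω * Complex.I))).cexp.comp_ofReal.congr_deriv ?_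
    rw [mul_one, mul_comm]
    rfl
  have hz (t : ℝ) : HasDerivAt z (f t * rot t) t := by
    refine ((((hv' t).ofReal_comp).add (((hv t).ofReal_comp).const_mul (ω * Complex.I))).mul
      (hrot t)).congr_deriv ?_
    simp only [Pi.add_apply]
    push_cast
    linear_combination (-(v t : ℂ) * (ω : ℂ) ^ 2 * rot t) * Complex.I_mul_I
  have hvz (t : ℝ) : ω * |v t| ≤ ‖z t‖ :=
    calc ω * |v t| = |((v' t : ℂ) + ω * Complex.I * v t).im| := by simp [abs_mul, abs_of_pos hω]
      _ ≤ ‖(v' t : ℂ) + ω * Complex.I * v t‖ := Complex.abs_im_le_norm _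
      _ = ‖z t‖ := by simp [z, norm_rot]
  have hgron := norm_le_gronwallBound_of_norm_deriv_right_le (a := 0) (b := T) (δ := 0)
    (fun t _ => (hz t).continuousAt.continuousWithinAt) (fun t _ => (hz t).hasDerivWithinAt)
    (by simp [z, h0, h0']) fun t ht => by
      rw [norm_mul, norm_rot, mul_one, Complex.norm_real, norm_eq_abs]
      exact (hf t ht).trans (by gcongr; exact hvz t)
  intro t ht
  simpa using (hvz t).trans (hgron t ht)

theorem gronwallBound_zero_le_of_mul_le {K ε t : ℝ} (hK : 0 < K) (hε : 0 ≤ ε)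
    (hKt : K * t ≤ 1 / 4) : gronwallBound 0 K ε t ≤ ε / K / 3 := by
  have hexp : exp (K * t) ≤ 4 / 3 :=
    calc exp (K * t) ≤ exp (1 / 4) := exp_le_exp.2 hKt
      _ ≤ 1 / (1 - 1 / 4) := exp_bound_div_one_sub_of_interval (by norm_num) (by norm_num)
      _ = 4 / 3 := by norm_num
  simp only [gronwallBound_of_K_ne_0 hK.ne', zero_mul, zero_add]
  calc ε / K * (exp (K * t) - 1) ≤ ε / K * (4 / 3 - 1) := by gcongr
    _ = ε / K / 3 := by ring

noncomputable def hermiteFunction (m : ℕ) (t : ℝ) : ℝ :=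
  exp (-(t ^ 2) / 4) * aeval t (hermite m)

theorem hasDerivAt_exp_neg_sq_div_four (t : ℝ) :
    HasDerivAt (fun s : ℝ => exp (-(s ^ 2) / 4)) (-(t / 2) * exp (-(t ^ 2) / 4)) t := by
  refine (((hasDerivAt_pow 2 t).neg.div_const 4).exp).congr_deriv ?_
  simp only [Pi.neg_apply]
  push_cast
  ring

theorem hasDerivAt_hermiteFunction (m : ℕ) (t : ℝ) :
    HasDerivAt (hermiteFunction m)
      (exp (-(t ^ 2) / 4) * (aeval t (derivative (hermite m)) - t / 2 * aeval t (hermite m))) t :=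
  ((hasDerivAt_exp_neg_sq_div_four t).mul (Polynomial.hasDerivAt_aeval _ t)).congr_deriv (by ring)

theorem hasDerivAt_deriv_hermiteFunction (m : ℕ) (t : ℝ) :
    HasDerivAt (deriv (hermiteFunction m))
      ((t ^ 2 / 4 - (m + 1 / 2)) * hermiteFunction m t) t := by
  have hderiv : deriv (hermiteFunction m) = fun s => exp (-(s ^ 2) / 4) *
      (aeval s (derivative (hermite m)) - s / 2 * aeval s (hermite m)) :=
    funext fun s => (hasDerivAt_hermiteFunction m s).deriv
  rw [hderiv]
  refine ((hasDerivAt_exp_neg_sq_div_four t).mul ((Polynomial.hasDerivAt_aeval _ t).sub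
    (((hasDerivAt_id t).div_const 2).mul (Polynomial.hasDerivAt_aeval _ t)))).congr_deriv ?_
  have hode := congrArg (aeval t) (derivative_derivative_hermite m)
  simp only [map_sub, map_mul, map_natCast, aeval_X] at hode
  simp only [hermiteFunction, Pi.sub_apply, Pi.mul_apply, hode, id]
  ring

theorem deriv_hermiteFunction_zero {m : ℕ} (hm : Even m) : deriv (hermiteFunction m) 0 = 0 := by
  simp [(hasDerivAt_hermiteFunction m 0).deriv, ← coeff_zero_eq_aeval_zero', coeff_derivative,
    coeff_hermite_of_odd_add hm.add_one]

theorem hasDerivAt_deriv_hermiteFunction_add_mul_sin {m : ℕ} {ω : ℝ} (hω2 : ω ^ 2 = m + 1 / 2)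
    (c t : ℝ) :
    HasDerivAt (fun t => deriv (hermiteFunction m) t + c * ω * sin (ω * t))
      (t ^ 2 / 4 * hermiteFunction m t - ω ^ 2 * (hermiteFunction m t - c * cos (ω * t))) t := by
  refine ((hasDerivAt_deriv_hermiteFunction m t).add
    ((((hasDerivAt_id t).const_mul ω).sin).const_mul (c * ω))).congr_deriv ?_
  simp only [id]
  linear_combination hermiteFunction m t * hω2

theorem abs_hermiteFunction_sub_mul_cos_le {m : ℕ} (hm : Even m) {y : ℝ} (hy : 0 ≤ y)
    (hy3 : y ^ 3 ≤ √(m + 1 / 2)) :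
    |hermiteFunction m y - aeval 0 (hermite m) * cos (√(m + 1 / 2) * y)| ≤
      |aeval (0 : ℝ) (hermite m)| / 3 := by
  set ω := √((m : ℝ) + 1 / 2)
  set c := aeval (0 : ℝ) (hermite m)
  have hω : 0 < ω := Real.sqrt_pos.2 (by positivity)
  have hω2 : ω ^ 2 = m + 1 / 2 := Real.sq_sqrt (by positivity)
  rcases hy.eq_or_lt with rfl | hy0
  · simpa [hermiteFunction, c] using by positivity
  set v : ℝ → ℝ := fun t => hermiteFunction m t - c * cos (ω * t)
  set K := y ^ 2 / (4 * ω)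
  have hK : 0 < K := by positivity
  have hKω : K * ω = y ^ 2 / 4 := by simp only [K]; field_simp
  have hv (t : ℝ) : HasDerivAt v (deriv (hermiteFunction m) t + c * ω * sin (ω * t)) t := by
    refine ((hasDerivAt_hermiteFunction m t).differentiableAt.hasDerivAt.sub
      ((((hasDerivAt_id t).const_mul ω).cos).const_mul c)).congr_deriv ?_
    simp only [id]
    ring
  have hf : ∀ t ∈ Ico 0 y,
      |t ^ 2 / 4 * hermiteFunction m t| ≤ K * (ω * |v t|) + y ^ 2 * |c| / 4 := by
    intro t ht
    have hG : |hermiteFunction m t| ≤ |v t| + |c| :=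
      calc |hermiteFunction m t| = |v t + c * cos (ω * t)| := by simp [v]
        _ ≤ |v t| + |c| * |cos (ω * t)| := (abs_add_le _ _).trans_eq (by rw [abs_mul])
        _ ≤ |v t| + |c| := by gcongr; exact mul_le_of_le_one_right (abs_nonneg c) (abs_cos_le_one _)
    calc |t ^ 2 / 4 * hermiteFunction m t| = t ^ 2 / 4 * |hermiteFunction m t| := by
          rw [abs_mul, abs_of_nonneg (by positivity)]
      _ ≤ y ^ 2 / 4 * (|v t| + |c|) := by gcongr; exacts [ht.1, ht.2.le]
      _ = K * (ω * |v t|) + y ^ 2 * |c| / 4 := by rw [← mul_assoc, hKω]; ring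
  have hbound := mul_abs_le_gronwallBound_of_forced_oscillator hω hK.le hv
    (hasDerivAt_deriv_hermiteFunction_add_mul_sin hω2 c)
    (by simp [v, hermiteFunction, c]) (by simp [deriv_hermiteFunction_zero hm]) hf y ⟨hy, le_rfl⟩
  have hKy : K * y ≤ 1 / 4 := by
    rw [div_mul_eq_mul_div, div_le_div_iff₀ (by positivity) (by norm_num)]
    nlinarith
  have hεK : y ^ 2 * |c| / 4 / K = ω * |c| := by
    rw [mul_div_right_comm, ← hKω]
    field_simp
  refine le_of_mul_le_mul_left (hbound.trans ?_) hω
  calc gronwallBound 0 K (y ^ 2 * |c| / 4) y ≤ ω * |c| / 3 := by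
        rw [← hεK]; exact gronwallBound_zero_le_of_mul_le hK (by positivity) hKy
    _ = ω * (|c| / 3) := by ring

theorem aeval_hermite_four_mul_pos {n : ℕ} {y : ℝ} (hy3 : |y| ^ 3 ≤ √(4 * n + 1 / 2))
    (hcos : 1 / 2 ≤ cos (√(4 * n + 1 / 2) * y)) : 0 < aeval y (hermite (4 * n)) := by
  have h4n : Even (4 * n) := ⟨2 * n, by ring⟩
  have heven : aeval |y| (hermite (4 * n)) = aeval y (hermite (4 * n)) := by
    rcases abs_choice y with h | h <;> simp [h, aeval_neg_hermite, h4n.neg_one_pow]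
  have hc := aeval_zero_hermite_four_mul_pos n
  have hclose := abs_hermiteFunction_sub_mul_cos_le h4n (abs_nonneg y) (by exact_mod_cast hy3)
  have hcos' : cos (√((4 * n : ℕ) + 1 / 2) * |y|) = cos (√(4 * n + 1 / 2) * y) := by
    rw [← abs_of_nonneg (Real.sqrt_nonneg ((4 * n : ℕ) + 1 / 2)), ← abs_mul, cos_abs]
    push_cast
    rfl
  rw [hcos', abs_of_pos hc, abs_le] at hclose
  have hG : 0 < hermiteFunction (4 * n) |y| := by nlinarith [hclose.1]
  rw [← heven]
  exact (mul_pos_iff_of_pos_left (exp_pos _)).1 hG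

theorem two_mul_le_sqrt_four_mul_sq_add_half (q : ℝ) : 2 * q ≤ √(4 * q ^ 2 + 1 / 2) :=
  Real.le_sqrt_of_sq_le (by nlinarith)

theorem sqrt_four_mul_sq_add_half_sub_two_mul_le {q : ℝ} (hq : 0 < q) :
    √(4 * q ^ 2 + 1 / 2) - 2 * q ≤ 1 / (8 * q) := by
  have hω := two_mul_le_sqrt_four_mul_sq_add_half q
  have hω2 : √(4 * q ^ 2 + 1 / 2) ^ 2 = 4 * q ^ 2 + 1 / 2 := Real.sq_sqrt (by positivity)
  rw [le_div_iff₀ (by positivity)]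
  nlinarith

theorem half_le_cos_sqrt_four_mul_sq_add_half_mul {q y : ℝ} (hq : 0 < q) (hy : |y| ≤ q)
    (hqy : ‖((2 * q * y : ℝ) : AddCircle (2 * π))‖ < π / 6) :
    1 / 2 ≤ cos (√(4 * q ^ 2 + 1 / 2) * y) := by
  set ω := √(4 * q ^ 2 + 1 / 2)
  have hdetune : |(ω - 2 * q) * y| ≤ 1 / 8 := by
    rw [abs_mul, abs_of_nonneg (sub_nonneg.2 (two_mul_le_sqrt_four_mul_sq_add_half q))]
    calc (ω - 2 * q) * |y| ≤ 1 / (8 * q) * q := by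
          gcongr
          exact sqrt_four_mul_sq_add_half_sub_two_mul_le hq
      _ = 1 / 8 := by field_simp
  apply half_le_cos_of_norm_coe_le
  calc ‖((ω * y : ℝ) : AddCircle (2 * π))‖
      = ‖(((ω - 2 * q) * y : ℝ) : AddCircle (2 * π)) + ((2 * q * y : ℝ) : AddCircle (2 * π))‖ := by
        rw [← AddCircle.coe_add]; ring_nf
    _ ≤ |(ω - 2 * q) * y| + π / 6 :=
        (norm_add_le _ _).trans (add_le_add QuotientAddGroup.norm_mk_le_norm hqy.le)
    _ ≤ π / 3 := by linarith [pi_gt_three]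

theorem stmt4 (k : ℕ) (a : Fin k → ℝ) :
    {n : ℕ | ∀ j : Fin k, 0 < physHermite (4 * n) (a j)}.Infinite := by
  have : Fact (0 < 2 * π) := ⟨two_pi_pos⟩
  set y : Fin k → ℝ := fun j => √2 * a j
  have happrox := frequently_norm_nsmul_lt
    (fun j => ((2 * y j : ℝ) : AddCircle (2 * π))) (by positivity : 0 < π / 6)
  have hlarge : ∀ᶠ q : ℕ in atTop, 0 < q ∧ ∀ j, |y j| ≤ q ∧ |y j| ^ 3 ≤ q :=
    (eventually_gt_atTop 0).and <| eventually_all.2 fun j =>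
      (tendsto_natCast_atTop_atTop.eventually_ge_atTop _).and
        (tendsto_natCast_atTop_atTop.eventually_ge_atTop _)
  rw [← Nat.frequently_atTop_iff_infinite]
  refine (tendsto_pow_atTop two_ne_zero).frequently ((happrox.and_eventually hlarge).mono ?_)
  rintro q ⟨hq, hq0, hqy⟩ j
  have hqj : ‖((2 * q * y j : ℝ) : AddCircle (2 * π))‖ < π / 6 := by
    have h := (norm_le_pi_norm (q • fun j => ((2 * y j : ℝ) : AddCircle (2 * π))) j).trans_lt hq
    rwa [Pi.smul_apply, ← AddCircle.coe_nsmul, nsmul_eq_mul, mul_left_comm, ← mul_assoc] at h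
  have hcos := half_le_cos_sqrt_four_mul_sq_add_half_mul (by exact_mod_cast hq0) (hqy j).1 hqj
  have hy3 : |y j| ^ 3 ≤ √(4 * q ^ 2 + 1 / 2) := by
    linarith [(hqy j).2, two_mul_le_sqrt_four_mul_sq_add_half q]
  exact mul_pos (by positivity)
    (aeval_hermite_four_mul_pos (n := q ^ 2) (by push_cast; exact hy3) (by push_cast; exact hcos))
end

section
/- Let d ≥ 1, set ν = d/2 − 1, and let n ∈ ℕ. Define the radial function f: ℝ^d → ℝ by f(x) = L_n^ν(2π|x|²)·e^{−π|x|²}. Then its Fourier transform satisfies f̂(y) = (−1)^n · L_n^ν(2π|y|²)·e^{−π|y|²} for all y ∈ ℝ^d. -/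
/-!
Expanding `L_n^ν(2π|x|²)`, the function is a combination of `|x|^{2k} e^{-b|x|²}` at `b = π`.
The Fourier transform of `|x|^{2k} e^{-b|x|²}` is `(-d/db)^k` of the Gaussian one,
`(π/b)^{d/2} e^{-c/b}` with `c = π²|y|²`, and equals `k! π^{d/2} b^{-d/2-k} e^{-c/b} L_k^ν(c/b)`:
both sides agree at `k = 0` and satisfy the same recursion in `k` thanks to the differential
recurrence `(k+1) L_{k+1}(u) = (k+ν+1-u) L_k(u) + u L_k'(u)`. At `b = π` this leaves a
combination of the `L_k^ν(π|y|²)`, which the multiplication theorem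
`L_n^ν(λt) = Σ_k binom(n+ν, n-k) λ^k (1-λ)^{n-k} L_k^ν(t)` at `λ = 2` sums to
`(-1)^n L_n^ν(2π|y|²)`.
-/

open MeasureTheory Real
open scoped FourierTransform

/-- The Laguerre polynomial `L_n^ν(t) = Σ_{k=0}^n (-1)^k (Γ(n+ν+1)/(Γ(k+ν+1)(n-k)!)) t^k/k!`. -/
noncomputable def laguerreL (ν : ℝ) (n : ℕ) (t : ℝ) : ℝ :=
  ∑ k ∈ Finset.range (n + 1),
    (-1 : ℝ) ^ k *
      (Real.Gamma ((n : ℝ) + ν + 1) /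
        (Real.Gamma ((k : ℝ) + ν + 1) * ((n - k).factorial : ℝ))) *
      t ^ k / (k.factorial : ℝ)

open Finset Nat

noncomputable def laguerreCoeff (ν : ℝ) (n j : ℕ) : ℝ :=
  (-1) ^ j * (Gamma (n + ν + 1) / (Gamma (j + ν + 1) * (n - j)!)) / j !

theorem laguerreL_eq_sum (ν : ℝ) (n : ℕ) (t : ℝ) :
    laguerreL ν n t = ∑ j ∈ range (n + 1), laguerreCoeff ν n j * t ^ j :=
  sum_congr rfl fun _ _ ↦ by rw [laguerreCoeff]; ring

theorem hasDerivAt_laguerreL (ν : ℝ) (n : ℕ) (t : ℝ) :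
    HasDerivAt (laguerreL ν n)
      (∑ j ∈ range (n + 1), laguerreCoeff ν n j * (j * t ^ (j - 1))) t := by
  simp_rw [funext (laguerreL_eq_sum ν n)]
  exact HasDerivAt.fun_sum fun j _ ↦ (hasDerivAt_pow j t).const_mul _

theorem mul_deriv_laguerreL (ν : ℝ) (n : ℕ) (t : ℝ) :
    t * deriv (laguerreL ν n) t = ∑ j ∈ range (n + 1), j * laguerreCoeff ν n j * t ^ j := by
  rw [(hasDerivAt_laguerreL ν n t).deriv, mul_sum]
  refine sum_congr rfl fun j _ ↦ ?_
  rcases j with _ | j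
  · simp
  · rw [add_tsub_cancel_right, pow_succ]; push_cast; ring

section

variable {ν : ℝ} (hν : 0 < ν + 1)
include hν

theorem natCast_add_add_one_pos (j : ℕ) : 0 < (j : ℝ) + ν + 1 := by
  linarith [(j.cast_nonneg : (0 : ℝ) ≤ j)]

theorem Gamma_natCast_add_ne_zero (j : ℕ) : Gamma (j + ν + 1) ≠ 0 :=
  (Gamma_pos_of_pos (natCast_add_add_one_pos hν j)).ne'

theorem Gamma_natCast_succ_add (j : ℕ) :
    Gamma ((j + 1 : ℕ) + ν + 1) = (j + ν + 1) * Gamma (j + ν + 1) := by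
  rw [← Gamma_add_one (natCast_add_add_one_pos hν j).ne']; push_cast; ring_nf

theorem laguerreL_zero (t : ℝ) : laguerreL ν 0 t = 1 := by
  simpa [laguerreL] using Gamma_natCast_add_ne_zero hν 0

theorem laguerreCoeff_succ_zero (k : ℕ) :
    (k + 1) * laguerreCoeff ν (k + 1) 0 = (k + ν + 1) * laguerreCoeff ν k 0 := by
  have := Gamma_natCast_add_ne_zero hν 0
  simp only [laguerreCoeff, Gamma_natCast_succ_add hν, Nat.sub_zero, Nat.factorial_succ]
  push_cast
  field_simp

theorem laguerreCoeff_succ_self (k : ℕ) :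
    (k + 1) * laguerreCoeff ν (k + 1) (k + 1) = -laguerreCoeff ν k k := by
  have := Gamma_natCast_add_ne_zero hν k
  have := (natCast_add_add_one_pos hν k).ne'
  simp only [laguerreCoeff, Gamma_natCast_succ_add hν, Nat.sub_self, Nat.factorial_succ, pow_succ]
  push_cast
  field_simp

theorem laguerreCoeff_succ_succ {k j : ℕ} (hjk : j < k) :
    (k + 1) * laguerreCoeff ν (k + 1) (j + 1)
      = (k + ν + 1 + (j + 1)) * laguerreCoeff ν k (j + 1) - laguerreCoeff ν k j := by
  obtain ⟨m, rfl⟩ := Nat.exists_eq_add_of_lt hjk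
  have := Gamma_natCast_add_ne_zero hν j
  have := Gamma_natCast_add_ne_zero hν (j + m + 1)
  have := (natCast_add_add_one_pos hν j).ne'
  have e1 : j + m + 1 + 1 - (j + 1) = m + 1 := by omega
  have e2 : j + m + 1 - (j + 1) = m := by omega
  have e3 : j + m + 1 - j = m + 1 := by omega
  simp only [laguerreCoeff]
  rw [e1, e2, e3, Gamma_natCast_succ_add hν (j + m + 1), Gamma_natCast_succ_add hν j]
  simp only [Nat.factorial_succ, pow_succ]
  push_cast
  field_simp
  ring

theorem succ_mul_laguerreL_succ (k : ℕ) (u : ℝ) :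
    (k + 1) * laguerreL ν (k + 1) u
      = (k + ν + 1 - u) * laguerreL ν k u + u * deriv (laguerreL ν k) u := by
  have hrhs : (k + ν + 1 - u) * laguerreL ν k u + u * deriv (laguerreL ν k) u
      = ∑ j ∈ range (k + 1), (k + ν + 1 + j) * laguerreCoeff ν k j * u ^ j
        - ∑ j ∈ range (k + 1), laguerreCoeff ν k j * u ^ (j + 1) := by
    rw [mul_deriv_laguerreL, laguerreL_eq_sum, mul_sum, ← sum_sub_distrib, ← sum_add_distrib]
    exact sum_congr rfl fun j _ ↦ by ring
  have hsucc : ∀ j ∈ range k, (k + 1) * (laguerreCoeff ν (k + 1) (j + 1) * u ^ (j + 1))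
      = (k + ν + 1 + (j + 1 : ℕ)) * laguerreCoeff ν k (j + 1) * u ^ (j + 1)
        - laguerreCoeff ν k j * u ^ (j + 1) := fun j hj ↦ by
    push_cast
    rw [← sub_mul, ← laguerreCoeff_succ_succ hν (mem_range.1 hj)]
    ring
  rw [hrhs, laguerreL_eq_sum, mul_sum, sum_range_succ', sum_range_succ, sum_congr rfl hsucc,
    sum_sub_distrib, sum_range_succ' _ k, sum_range_succ _ k, ← mul_assoc,
    laguerreCoeff_succ_self hν, ← mul_assoc, laguerreCoeff_succ_zero hν]
  push_cast
  ring

theorem Gamma_div_mul_laguerreCoeff {n k j : ℕ} (hjk : j ≤ k) (hkn : k ≤ n) :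
    Gamma (n + ν + 1) / (Gamma (k + ν + 1) * (n - k)!) * laguerreCoeff ν k j
      = laguerreCoeff ν n j * (n - j).choose (k - j) := by
  obtain ⟨a, rfl⟩ := Nat.exists_eq_add_of_le hjk
  obtain ⟨b, rfl⟩ := Nat.exists_eq_add_of_le hkn
  have := Gamma_natCast_add_ne_zero hν (j + a)
  have := Gamma_natCast_add_ne_zero hν j
  simp only [laguerreCoeff, Nat.add_sub_add_left, Nat.add_sub_cancel_left, Nat.add_assoc,
    Nat.cast_add_choose]
  field_simp

theorem laguerreL_mul (n : ℕ) (l t : ℝ) :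
    laguerreL ν n (l * t) = ∑ k ∈ range (n + 1),
      Gamma (n + ν + 1) / (Gamma (k + ν + 1) * (n - k)!) * l ^ k * (1 - l) ^ (n - k)
        * laguerreL ν k t := by
  set g : ℕ → ℕ → ℝ := fun j i ↦
    laguerreCoeff ν n j * t ^ j * ((n - j).choose i * l ^ (j + i) * (1 - l) ^ (n - j - i))
  have hexpand : ∀ k ∈ range (n + 1),
      Gamma (n + ν + 1) / (Gamma (k + ν + 1) * (n - k)!) * l ^ k * (1 - l) ^ (n - k)
        * laguerreL ν k t = ∑ j ∈ range (k + 1), g j (k - j) := fun k hk ↦ by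
    rw [laguerreL_eq_sum, mul_sum]
    refine sum_congr rfl fun j hj ↦ ?_
    have hjk := Nat.lt_succ_iff.1 (mem_range.1 hj)
    have hkn := Nat.lt_succ_iff.1 (mem_range.1 hk)
    simp only [g, Nat.add_sub_cancel' hjk, Nat.sub_sub]
    linear_combination (l ^ k * t ^ j * (1 - l) ^ (n - k)) * Gamma_div_mul_laguerreCoeff hν hjk hkn
  have hinner : ∀ j ∈ range (n + 1), ∑ i ∈ range (n + 1 - j), g j i
      = laguerreCoeff ν n j * (l * t) ^ j := fun j hj ↦ by
    rw [Nat.sub_add_comm (Nat.lt_succ_iff.1 (mem_range.1 hj))]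
    calc ∑ i ∈ range (n - j + 1), g j i
        = laguerreCoeff ν n j * (l * t) ^ j
            * ∑ i ∈ range (n - j + 1), l ^ i * (1 - l) ^ (n - j - i) * (n - j).choose i := by
          rw [mul_sum]
          exact sum_congr rfl fun i _ ↦ by simp only [g]; ring
      _ = laguerreCoeff ν n j * (l * t) ^ j := by rw [← add_pow]; simp
  rw [sum_congr rfl hexpand, sum_range_diag_flip, sum_congr rfl hinner, laguerreL_eq_sum]

theorem sum_laguerreCoeff_mul_laguerreL (n : ℕ) (t : ℝ) :
    ∑ k ∈ range (n + 1), laguerreCoeff ν n k * 2 ^ k * k ! * laguerreL ν k t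
      = (-1) ^ n * laguerreL ν n (2 * t) := by
  rw [laguerreL_mul hν, mul_sum]
  refine sum_congr rfl fun k hk ↦ ?_
  have hsign : (-1 : ℝ) ^ n * (1 - 2) ^ (n - k) = (-1) ^ k := by
    rw [show (1 : ℝ) - 2 = -1 by norm_num, ← pow_add,
      show n + (n - k) = k + 2 * (n - k) by have := mem_range.1 hk; omega, pow_add, pow_mul]
    norm_num
  have hcoeff : laguerreCoeff ν n k * k !
      = (-1) ^ k * (Gamma (n + ν + 1) / (Gamma (k + ν + 1) * (n - k)!)) := by
    rw [laguerreCoeff]; field_simp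
  linear_combination (2 ^ k * laguerreL ν k t) * hcoeff
    - (Gamma (n + ν + 1) / (Gamma (k + ν + 1) * (n - k)!) * 2 ^ k * laguerreL ν k t) * hsign

end

noncomputable def laguerreKernel (ν c : ℝ) (k : ℕ) (b : ℝ) : ℝ :=
  k ! * b ^ (-(ν + 1) - k) * rexp (-(c / b)) * laguerreL ν k (c / b)

theorem hasDerivAt_laguerreKernel {ν : ℝ} (hν : 0 < ν + 1) (c : ℝ) (k : ℕ) {b : ℝ} (hb : 0 < b) :
    HasDerivAt (laguerreKernel ν c k) (-laguerreKernel ν c (k + 1) b) b := by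
  have hu : HasDerivAt (fun x ↦ c / x) (-(c / b ^ 2)) b := by
    simpa [div_eq_mul_inv] using (hasDerivAt_inv hb.ne').const_mul c
  have hpow := Real.hasDerivAt_rpow_const (p := -(ν + 1) - k) (Or.inl hb.ne')
  have hL := (hasDerivAt_laguerreL ν k (c / b)).differentiableAt.hasDerivAt.comp b hu
  refine (((hpow.const_mul (k ! : ℝ)).mul hu.neg.exp).mul hL).congr_deriv ?_
  simp only [Function.comp_apply, Pi.mul_apply, Pi.neg_apply]
  have hrec := succ_mul_laguerreL_succ hν k (c / b)
  simp only [laguerreKernel, Nat.factorial_succ]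
  push_cast
  rw [show -(ν + 1) - (k + 1) = -(ν + 1) - k - 1 by ring, rpow_sub_one hb.ne']
  linear_combination (k ! * b ^ (-(ν + 1) - k) / b * rexp (-(c / b))) * hrec

theorem rpow_mul_laguerreKernel_mul_self (ν : ℝ) (k : ℕ) {b : ℝ} (hb : 0 < b) (t : ℝ) :
    b ^ (ν + 1 + k) * laguerreKernel ν (b * t) k b = k ! * rexp (-t) * laguerreL ν k t := by
  have hpow : b ^ (ν + 1 + k) * b ^ (-(ν + 1) - k) = 1 := by
    rw [← rpow_add hb, show ν + 1 + k + (-(ν + 1) - k) = 0 by ring, rpow_zero]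
  rw [laguerreKernel, mul_div_cancel_left₀ t hb.ne']
  linear_combination (k ! * rexp (-t) * laguerreL ν k t) * hpow

theorem eqOn_of_hasDerivAt_neg_succ {F : Type*} [NormedAddCommGroup F] [NormedSpace ℝ F]
    {s : Set ℝ} (hs : IsOpen s) {f g : ℕ → ℝ → F}
    (hf : ∀ k, ∀ b ∈ s, HasDerivAt (f k) (-f (k + 1) b) b)
    (hg : ∀ k, ∀ b ∈ s, HasDerivAt (g k) (-g (k + 1) b) b) (h0 : Set.EqOn (f 0) (g 0) s) :
    ∀ k, Set.EqOn (f k) (g k) s := by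
  intro k
  induction k with
  | zero => exact h0
  | succ k ih =>
    intro b hb
    have hfg : f k =ᶠ[nhds b] g k := Filter.eventually_of_mem (hs.mem_nhds hb) ih
    exact neg_injective <| (hf k b hb).unique ((hg k b hb).congr_of_eventuallyEq hfg)

section Fourier

variable {V : Type*} [NormedAddCommGroup V]

noncomputable def normSqPowGaussian (k : ℕ) (b : ℝ) (v : V) : ℝ :=
  (‖v‖ ^ 2) ^ k * rexp (-b * ‖v‖ ^ 2)

theorem normSqPowGaussian_nonneg (k : ℕ) (b : ℝ) (v : V) : 0 ≤ normSqPowGaussian k b v := by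
  unfold normSqPowGaussian; positivity

theorem normSqPowGaussian_le_of_le (k : ℕ) {b b' : ℝ} (h : b ≤ b') (v : V) :
    normSqPowGaussian k b' v ≤ normSqPowGaussian k b v := by
  unfold normSqPowGaussian
  gcongr

theorem normSqPowGaussian_le_mul_exp (k : ℕ) {b : ℝ} (hb : 0 < b) (v : V) :
    normSqPowGaussian k b v ≤ (2 / b) ^ k * k ! * rexp (-(b / 2) * ‖v‖ ^ 2) := by
  set x := b / 2 * ‖v‖ ^ 2
  have hx := pow_div_factorial_le_exp x (by positivity) k
  rw [div_le_iff₀ (by positivity)] at hx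
  calc normSqPowGaussian k b v = (2 / b) ^ k * x ^ k * rexp (-x) * rexp (-x) := by
        rw [normSqPowGaussian, ← mul_pow, mul_assoc, ← Real.exp_add]
        congr 2 <;> field_simp <;> ring
    _ ≤ (2 / b) ^ k * (rexp x * k !) * rexp (-x) * rexp (-x) := by gcongr
    _ = (2 / b) ^ k * k ! * rexp (-(b / 2) * ‖v‖ ^ 2) := by
        have hexp : rexp x * rexp (-x) = 1 := by rw [← Real.exp_add, add_neg_cancel, Real.exp_zero]
        rw [show -(b / 2) * ‖v‖ ^ 2 = -x by ring]
        linear_combination ((2 / b) ^ k * k ! * rexp (-x)) * hexp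

theorem hasDerivAt_normSqPowGaussian (k : ℕ) (b : ℝ) (v : V) :
    HasDerivAt (fun x ↦ normSqPowGaussian k x v) (-normSqPowGaussian (k + 1) b v) b := by
  have := (((hasDerivAt_id b).neg.mul_const (‖v‖ ^ 2)).exp).const_mul ((‖v‖ ^ 2) ^ k)
  refine this.congr_deriv ?_
  simp only [normSqPowGaussian, Pi.neg_apply, id]
  ring

theorem laguerreL_mul_exp_eq_sum (ν a b : ℝ) (n : ℕ) (v : V) :
    laguerreL ν n (a * ‖v‖ ^ 2) * rexp (-b * ‖v‖ ^ 2)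
      = ∑ k ∈ range (n + 1), laguerreCoeff ν n k * a ^ k * normSqPowGaussian k b v := by
  rw [laguerreL_eq_sum, sum_mul]
  exact sum_congr rfl fun k _ ↦ by rw [normSqPowGaussian, mul_pow]; ring

variable [InnerProductSpace ℝ V] [FiniteDimensional ℝ V] [MeasurableSpace V] [BorelSpace V]

theorem fourier_sum_mul {ι : Type*} (s : Finset ι) (a : ι → ℂ) {f : ι → V → ℂ}
    (hf : ∀ i ∈ s, Integrable (f i)) (w : V) :
    𝓕 (fun v ↦ ∑ i ∈ s, a i * f i v) w = ∑ i ∈ s, a i * 𝓕 (f i) w := by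
  simp only [Real.fourier_eq, smul_sum, ← mul_smul_comm]
  rw [integral_finsetSum _ fun i hi ↦ ((fourierIntegral_convergent_iff w).2 (hf i hi)).const_mul _]
  simp only [integral_const_mul]

theorem integrable_exp_neg_mul_sq_norm {b : ℝ} (hb : 0 < b) :
    Integrable fun v : V ↦ rexp (-b * ‖v‖ ^ 2) :=
  Integrable.of_integral_ne_zero <| by
    rw [GaussianFourier.integral_rexp_neg_mul_sq_norm hb]; positivity

theorem integrable_normSqPowGaussian (k : ℕ) {b : ℝ} (hb : 0 < b) :
    Integrable (normSqPowGaussian k b : V → ℝ) := by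
  refine ((integrable_exp_neg_mul_sq_norm (half_pos hb)).const_mul ((2 / b) ^ k * k !)).mono'
    ?_ ?_
  · unfold normSqPowGaussian; fun_prop
  · refine Filter.Eventually.of_forall fun v ↦ ?_
    rw [Real.norm_of_nonneg (normSqPowGaussian_nonneg k b v)]
    exact normSqPowGaussian_le_mul_exp k hb v

open scoped RealInnerProductSpace in
theorem hasDerivAt_fourier_normSqPowGaussian (w : V) (k : ℕ) {b : ℝ} (hb : 0 < b) :
    HasDerivAt (fun x : ℝ ↦ 𝓕 (fun v : V ↦ (normSqPowGaussian k x v : ℂ)) w)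
      (-𝓕 (fun v : V ↦ (normSqPowGaussian (k + 1) b v : ℂ)) w) b := by
  have hint : ∀ k {x : ℝ}, 0 < x →
      Integrable fun v : V ↦ 𝐞 (-⟪v, w⟫) • (normSqPowGaussian k x v : ℂ) := fun k x hx ↦
    (fourierIntegral_convergent_iff w).2 (integrable_normSqPowGaussian k hx).ofReal
  have hbound : ∀ᵐ v : V, ∀ x ∈ Metric.ball b (b / 2),
      ‖𝐞 (-⟪v, w⟫) • (-normSqPowGaussian (k + 1) x v : ℂ)‖
        ≤ normSqPowGaussian (k + 1) (b / 2) v := by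
    refine Filter.Eventually.of_forall fun v x hx ↦ ?_
    rw [Circle.norm_smul, norm_neg, Complex.norm_real,
      Real.norm_of_nonneg (normSqPowGaussian_nonneg _ _ _)]
    have := (abs_lt.1 ((Real.dist_eq x b) ▸ Metric.mem_ball.1 hx)).1
    exact normSqPowGaussian_le_of_le _ (by linarith) v
  have hderiv : ∀ᵐ v : V, ∀ x ∈ Metric.ball b (b / 2),
      HasDerivAt (fun x ↦ 𝐞 (-⟪v, w⟫) • (normSqPowGaussian k x v : ℂ))
        (𝐞 (-⟪v, w⟫) • (-normSqPowGaussian (k + 1) x v : ℂ)) x :=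
    Filter.Eventually.of_forall fun v x _ ↦
      ((hasDerivAt_normSqPowGaussian k x v).ofReal_comp.const_smul (𝐞 (-⟪v, w⟫))).congr_deriv
        (by push_cast; rfl)
  have := hasDerivAt_integral_of_dominated_loc_of_deriv_le (Metric.ball_mem_nhds b (half_pos hb))
    ((lt_mem_nhds hb).mono fun _ hx ↦ (hint k hx).aestronglyMeasurable) (hint k hb)
    (by simp_rw [smul_neg]; exact (hint (k + 1) hb).aestronglyMeasurable.neg) hbound
    (integrable_normSqPowGaussian (k + 1) (half_pos hb)) hderiv
  simpa [Real.fourier_eq, integral_neg] using this.2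

open Module in
theorem fourier_normSqPowGaussian_zero (hV : 0 < finrank ℝ V) (w : V) {b : ℝ} (hb : 0 < b) :
    𝓕 (fun v : V ↦ (normSqPowGaussian 0 b v : ℂ)) w
      = (π ^ ((finrank ℝ V : ℝ) / 2)
          * laguerreKernel ((finrank ℝ V : ℝ) / 2 - 1) (π ^ 2 * ‖w‖ ^ 2) 0 b : ℝ) := by
  have hν : 0 < (finrank ℝ V : ℝ) / 2 - 1 + 1 := by simp [hV]
  calc 𝓕 (fun v : V ↦ (normSqPowGaussian 0 b v : ℂ)) w
      = 𝓕 (fun v : V ↦ Complex.exp (-(b : ℂ) * ‖v‖ ^ 2)) w := by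
        simp [normSqPowGaussian, Complex.ofReal_exp]
    _ = (π / b) ^ ((finrank ℝ V : ℂ) / 2) * Complex.exp (-π ^ 2 * ‖w‖ ^ 2 / b) :=
        fourier_gaussian_innerProductSpace (by simpa using hb) w
    _ = ((π / b) ^ ((finrank ℝ V : ℝ) / 2) * rexp (-(π ^ 2 * ‖w‖ ^ 2 / b)) : ℝ) := by
        rw [Complex.ofReal_mul, Complex.ofReal_cpow (by positivity), Complex.ofReal_exp]
        push_cast
        ring_nf
    _ = _ := by
        rw [laguerreKernel, laguerreL_zero hν, div_rpow pi_pos.le hb.le,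
          show -((finrank ℝ V : ℝ) / 2 - 1 + 1) - (0 : ℕ) = -((finrank ℝ V : ℝ) / 2) by simp,
          rpow_neg hb.le]
        simp [div_eq_mul_inv, mul_assoc]

open Module in
theorem fourier_normSqPowGaussian (hV : 0 < finrank ℝ V) (w : V) (k : ℕ) {b : ℝ} (hb : 0 < b) :
    𝓕 (fun v : V ↦ (normSqPowGaussian k b v : ℂ)) w
      = (π ^ ((finrank ℝ V : ℝ) / 2)
          * laguerreKernel ((finrank ℝ V : ℝ) / 2 - 1) (π ^ 2 * ‖w‖ ^ 2) k b : ℝ) := by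
  have hν : 0 < (finrank ℝ V : ℝ) / 2 - 1 + 1 := by simp [hV]
  refine eqOn_of_hasDerivAt_neg_succ isOpen_Ioi
    (f := fun k b ↦ 𝓕 (fun v : V ↦ (normSqPowGaussian k b v : ℂ)) w)
    (g := fun k b ↦ ((π ^ ((finrank ℝ V : ℝ) / 2)
      * laguerreKernel ((finrank ℝ V : ℝ) / 2 - 1) (π ^ 2 * ‖w‖ ^ 2) k b : ℝ) : ℂ))
    (fun k _ hb ↦ hasDerivAt_fourier_normSqPowGaussian w k hb) (fun k _ hb ↦ ?_)
    (fun _ hb ↦ fourier_normSqPowGaussian_zero hV w hb) k hb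
  simpa using ((hasDerivAt_laguerreKernel hν _ k hb).const_mul _).ofReal_comp

open Module in
theorem fourier_normSqPowGaussian_pi (hV : 0 < finrank ℝ V) (w : V) (k : ℕ) :
    𝓕 (fun v : V ↦ (normSqPowGaussian k π v : ℂ)) w
      = (k ! / π ^ k * rexp (-(π * ‖w‖ ^ 2)) * laguerreL ((finrank ℝ V : ℝ) / 2 - 1) k (π * ‖w‖ ^ 2)
          : ℝ) := by
  have hkernel := rpow_mul_laguerreKernel_mul_self ((finrank ℝ V : ℝ) / 2 - 1) k pi_pos
    (π * ‖w‖ ^ 2)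
  rw [show (finrank ℝ V : ℝ) / 2 - 1 + 1 + k = (finrank ℝ V : ℝ) / 2 + k by ring,
    rpow_add pi_pos, rpow_natCast] at hkernel
  rw [fourier_normSqPowGaussian hV w k pi_pos, show π ^ 2 * ‖w‖ ^ 2 = π * (π * ‖w‖ ^ 2) by ring]
  congr 1
  rw [div_mul_eq_mul_div, div_mul_eq_mul_div, eq_div_iff (by positivity), ← hkernel]
  ring

end Fourier

theorem stmt10 (d : ℕ) (hd : 1 ≤ d) (n : ℕ) :
    ∀ y : EuclideanSpace ℝ (Fin d),
      𝓕 (fun x : EuclideanSpace ℝ (Fin d) =>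
          ((laguerreL ((d : ℝ) / 2 - 1) n (2 * π * ‖x‖ ^ 2) * Real.exp (-π * ‖x‖ ^ 2) : ℝ) : ℂ))
        y =
      (((-1 : ℝ) ^ n *
          (laguerreL ((d : ℝ) / 2 - 1) n (2 * π * ‖y‖ ^ 2) * Real.exp (-π * ‖y‖ ^ 2)) : ℝ) : ℂ) := by
  intro y
  have hdim : Module.finrank ℝ (EuclideanSpace ℝ (Fin d)) = d := finrank_euclideanSpace_fin
  have hν : 0 < (d : ℝ) / 2 - 1 + 1 := by simp; omega
  have hexpand : (fun x : EuclideanSpace ℝ (Fin d) ↦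
      ((laguerreL ((d : ℝ) / 2 - 1) n (2 * π * ‖x‖ ^ 2) * rexp (-π * ‖x‖ ^ 2) : ℝ) : ℂ))
      = fun x ↦ ∑ k ∈ range (n + 1), ((laguerreCoeff ((d : ℝ) / 2 - 1) n k * (2 * π) ^ k : ℝ) : ℂ)
          * normSqPowGaussian k π x := by
    funext x
    rw [laguerreL_mul_exp_eq_sum, Complex.ofReal_sum]
    simp only [Complex.ofReal_mul]
  rw [hexpand, fourier_sum_mul (f := fun k x ↦ (normSqPowGaussian k π x : ℂ)) _ _
    fun k _ ↦ (integrable_normSqPowGaussian k pi_pos).ofReal]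
  simp_rw [fourier_normSqPowGaussian_pi (by rw [hdim]; omega) y, hdim, ← Complex.ofReal_mul,
    ← Complex.ofReal_sum]
  congr 1
  rw [show 2 * π * ‖y‖ ^ 2 = 2 * (π * ‖y‖ ^ 2) by ring, show -π * ‖y‖ ^ 2 = -(π * ‖y‖ ^ 2) by ring,
    ← mul_assoc, ← sum_laguerreCoeff_mul_laguerreL hν, sum_mul]
  refine sum_congr rfl fun k _ ↦ ?_
  linear_combination (laguerreCoeff ((d : ℝ) / 2 - 1) n k * 2 ^ k * k ! * rexp (-(π * ‖y‖ ^ 2))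
    * laguerreL ((d : ℝ) / 2 - 1) k (π * ‖y‖ ^ 2)) * mul_inv_cancel₀ (pow_ne_zero k pi_ne_zero)
end

section
/- Let a < b and let f, g: [a, b] → ℝ be nonnegative, measurable, bounded functions with ‖f‖_{L∞} ≤ 1. If g is nonincreasing on [a, b], then ∫_{b−‖f‖_{L¹}}^{b} g(x) dx ≤ ∫_a^b f(x)g(x) dx ≤ ∫_a^{a+‖f‖_{L¹}} g(x) dx, whereas the reverse inequalities hold if g is nondecreasing on [a, b]. -/
/-! Bathtub principle. For nonincreasing `g` and any `p ∈ [a, b]`, the function `f (g - g p)` lies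
below `g - g p` on `[a, p]` (where `g ≥ g p` and `f ≤ 1`) and below `0` on `[p, b]` (where `g ≤ g p`
and `f ≥ 0`). Integrating with `p = a + ∫ f`, so that `∫ f = p - a`, gives the upper bound. The lower
bound is the upper bound for the complementary weight `1 - f`, and the nondecreasing case follows
by replacing `g` with `-g`. -/

open MeasureTheory Set intervalIntegral

section Bathtub

variable {a b : ℝ} {f g : ℝ → ℝ}

lemma intervalIntegrable_of_ae_mem_Icc (hab : a ≤ b) {m M : ℝ}
    (hf : AEStronglyMeasurable f (volume.restrict (Icc a b)))
    (hfmM : ∀ᵐ x ∂volume.restrict (Icc a b), f x ∈ Icc m M) :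
    IntervalIntegrable f volume a b := by
  refine IntegrableOn.intervalIntegrable ?_
  rw [uIcc_of_le hab]
  refine .of_bound measure_Icc_lt_top hf (max |m| |M|) ?_
  filter_upwards [hfmM] with x hx
  exact abs_le_max_abs_abs hx.1 hx.2

lemma IntervalIntegrable.mul_of_ae_mem_Icc (hab : a ≤ b) {h : ℝ → ℝ} {m M : ℝ}
    (hf : IntervalIntegrable f volume a b)
    (hfmM : ∀ᵐ x ∂volume.restrict (Icc a b), f x ∈ Icc m M)
    (hh : IntervalIntegrable h volume a b) :
    IntervalIntegrable (fun x => f x * h x) volume a b := by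
  rw [intervalIntegrable_iff_integrableOn_Ioc_of_le hab] at *
  refine hh.bdd_mul hf.aestronglyMeasurable (c := max |m| |M|) ?_
  filter_upwards [ae_restrict_of_ae_restrict_of_subset Ioc_subset_Icc_self hfmM] with x hx
  exact abs_le_max_abs_abs hx.1 hx.2

lemma integral_mem_Icc_of_ae_mem_Icc_zero_one (hab : a ≤ b) (hf : IntervalIntegrable f volume a b)
    (hf01 : ∀ᵐ x ∂volume.restrict (Icc a b), f x ∈ Icc 0 1) :
    ∫ x in a..b, f x ∈ Icc 0 (b - a) := by
  constructor
  · exact integral_nonneg_of_ae_restrict hab (hf01.mono fun x hx => hx.1)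
  · simpa using integral_mono_ae_restrict hab hf intervalIntegrable_const
      (hf01.mono fun x hx => hx.2)

lemma AntitoneOn.integral_mul_sub_le {p : ℝ} (hp : p ∈ Icc a b) (hg : AntitoneOn g (Icc a b))
    (hf : IntervalIntegrable f volume a b)
    (hf01 : ∀ᵐ x ∂volume.restrict (Icc a b), f x ∈ Icc 0 1) :
    ∫ x in a..b, f x * (g x - g p) ≤ ∫ x in a..p, (g x - g p) := by
  have hab : a ≤ b := hp.1.trans hp.2
  have hg' : IntervalIntegrable (fun x => g x - g p) volume a b :=
    ((uIcc_of_le hab ▸ hg).intervalIntegrable).sub intervalIntegrable_const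
  have hfg := hf.mul_of_ae_mem_Icc hab hf01 hg'
  have hap : uIcc a p ⊆ uIcc a b := uIcc_subset_uIcc_left (mem_uIcc_of_le hp.1 hp.2)
  have hpb : uIcc p b ⊆ uIcc a b := uIcc_subset_uIcc_right (mem_uIcc_of_le hp.1 hp.2)
  have hf01_ap : ∀ᵐ x ∂volume.restrict (Icc a p), f x ∈ Icc 0 1 :=
    ae_restrict_of_ae_restrict_of_subset (Icc_subset_Icc_right hp.2) hf01
  have hf01_pb : ∀ᵐ x ∂volume.restrict (Icc p b), f x ∈ Icc 0 1 :=
    ae_restrict_of_ae_restrict_of_subset (Icc_subset_Icc_left hp.1) hf01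
  calc ∫ x in a..b, f x * (g x - g p)
      = (∫ x in a..p, f x * (g x - g p)) + ∫ x in p..b, f x * (g x - g p) :=
        (integral_add_adjacent_intervals (hfg.mono_set hap) (hfg.mono_set hpb)).symm
    _ ≤ (∫ x in a..p, (g x - g p)) + ∫ _ in p..b, (0 : ℝ) := by
        gcongr ?_ + ?_
        · refine integral_mono_ae_restrict hp.1 (hfg.mono_set hap) (hg'.mono_set hap) ?_
          filter_upwards [hf01_ap, ae_restrict_mem measurableSet_Icc] with x hfx hx
          have : g p ≤ g x := hg ⟨hx.1, hx.2.trans hp.2⟩ hp hx.2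
          exact mul_le_of_le_one_left (sub_nonneg.2 this) hfx.2
        · refine integral_mono_ae_restrict hp.2 (hfg.mono_set hpb) intervalIntegrable_const ?_
          filter_upwards [hf01_pb, ae_restrict_mem measurableSet_Icc] with x hfx hx
          have : g x ≤ g p := hg hp ⟨hp.1.trans hx.1, hx.2⟩ hx.1
          exact mul_nonpos_of_nonneg_of_nonpos hfx.1 (sub_nonpos.2 this)
    _ = ∫ x in a..p, (g x - g p) := by simp

lemma AntitoneOn.integral_mul_le (hab : a ≤ b) (hg : AntitoneOn g (Icc a b))
    (hf : IntervalIntegrable f volume a b)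
    (hf01 : ∀ᵐ x ∂volume.restrict (Icc a b), f x ∈ Icc 0 1) :
    ∫ x in a..b, f x * g x ≤ ∫ x in a..(a + ∫ x in a..b, f x), g x := by
  set p := a + ∫ x in a..b, f x
  have hc := integral_mem_Icc_of_ae_mem_Icc_zero_one hab hf hf01
  have hp : p ∈ Icc a b := ⟨by linarith [hc.1], by linarith [hc.2]⟩
  have key := hg.integral_mul_sub_le hp hf hf01
  have hg_ap : IntervalIntegrable g volume a p :=
    (uIcc_of_le hp.1 ▸ hg.mono (Icc_subset_Icc_right hp.2)).intervalIntegrable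
  have hfg : IntervalIntegrable (fun x => f x * g x) volume a b :=
    hf.mul_of_ae_mem_Icc hab hf01 ((uIcc_of_le hab ▸ hg).intervalIntegrable)
  simp only [mul_sub] at key
  rw [integral_sub hfg (hf.mul_const _), intervalIntegral.integral_mul_const,
    integral_sub hg_ap intervalIntegrable_const, intervalIntegral.integral_const] at key
  simp only [smul_eq_mul, p] at key ⊢
  linarith

lemma AntitoneOn.integral_le_integral_mul (hab : a ≤ b) (hg : AntitoneOn g (Icc a b))
    (hf : IntervalIntegrable f volume a b)
    (hf01 : ∀ᵐ x ∂volume.restrict (Icc a b), f x ∈ Icc 0 1) :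
    ∫ x in (b - ∫ x in a..b, f x)..b, g x ≤ ∫ x in a..b, f x * g x := by
  set p := b - ∫ x in a..b, f x
  have hc := integral_mem_Icc_of_ae_mem_Icc_zero_one hab hf hf01
  have hp : p ∈ uIcc a b := mem_uIcc_of_le (by linarith [hc.2]) (by linarith [hc.1])
  have hg_ab : IntervalIntegrable g volume a b := (uIcc_of_le hab ▸ hg).intervalIntegrable
  have hfg : IntervalIntegrable (fun x => f x * g x) volume a b :=
    hf.mul_of_ae_mem_Icc hab hf01 hg_ab
  have hf' : IntervalIntegrable (fun x => 1 - f x) volume a b := intervalIntegrable_const.sub hf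
  have key := hg.integral_mul_le hab hf'
    (hf01.mono fun x hx => ⟨by linarith [hx.2], by linarith [hx.1]⟩)
  simp only [sub_mul, one_mul] at key
  rw [integral_sub hg_ab hfg, integral_sub intervalIntegrable_const hf,
    intervalIntegral.integral_const, smul_eq_mul, mul_one,
    show a + (b - a - ∫ x in a..b, f x) = p by ring] at key
  have hsplit := integral_add_adjacent_intervals (hg_ab.mono_set (uIcc_subset_uIcc_left hp))
    (hg_ab.mono_set (uIcc_subset_uIcc_right hp))
  linarith

lemma MonotoneOn.integral_le_integral_mul (hab : a ≤ b) (hg : MonotoneOn g (Icc a b))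
    (hf : IntervalIntegrable f volume a b)
    (hf01 : ∀ᵐ x ∂volume.restrict (Icc a b), f x ∈ Icc 0 1) :
    ∫ x in a..(a + ∫ x in a..b, f x), g x ≤ ∫ x in a..b, f x * g x := by
  simpa [intervalIntegral.integral_neg] using hg.neg.integral_mul_le hab hf hf01

lemma MonotoneOn.integral_mul_le (hab : a ≤ b) (hg : MonotoneOn g (Icc a b))
    (hf : IntervalIntegrable f volume a b)
    (hf01 : ∀ᵐ x ∂volume.restrict (Icc a b), f x ∈ Icc 0 1) :
    ∫ x in a..b, f x * g x ≤ ∫ x in (b - ∫ x in a..b, f x)..b, g x := by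
  simpa [intervalIntegral.integral_neg] using hg.neg.integral_le_integral_mul hab hf hf01

end Bathtub

theorem stmt11_general (a b : ℝ) (hab : a < b) (f g : ℝ → ℝ)
    (hf_meas : AEMeasurable f (volume.restrict (Set.Icc a b)))
    (hf_nonneg : ∀ x ∈ Set.Icc a b, 0 ≤ f x)
    (hf_le_one : ∀ᵐ x ∂volume.restrict (Set.Icc a b), f x ≤ 1) :
    (AntitoneOn g (Set.Icc a b) →
      (∫ x in (b - ∫ x in a..b, |f x|)..b, g x) ≤ (∫ x in a..b, f x * g x) ∧
      (∫ x in a..b, f x * g x) ≤ ∫ x in a..(a + ∫ x in a..b, |f x|), g x) ∧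
    (MonotoneOn g (Set.Icc a b) →
      (∫ x in a..(a + ∫ x in a..b, |f x|), g x) ≤ (∫ x in a..b, f x * g x) ∧
      (∫ x in a..b, f x * g x) ≤ ∫ x in (b - ∫ x in a..b, |f x|)..b, g x) := by
  have hf01 : ∀ᵐ x ∂volume.restrict (Icc a b), f x ∈ Icc 0 1 := by
    filter_upwards [ae_restrict_mem measurableSet_Icc, hf_le_one] with x hx hx1
    exact ⟨hf_nonneg x hx, hx1⟩
  have hf := intervalIntegrable_of_ae_mem_Icc hab.le hf_meas.aestronglyMeasurable hf01
  have habs : ∫ x in a..b, |f x| = ∫ x in a..b, f x :=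
    integral_congr fun x hx => abs_of_nonneg (hf_nonneg x (uIcc_of_le hab.le ▸ hx))
  rw [habs]
  exact ⟨fun hg => ⟨hg.integral_le_integral_mul hab.le hf hf01,
      hg.integral_mul_le hab.le hf hf01⟩,
    fun hg => ⟨hg.integral_le_integral_mul hab.le hf hf01, hg.integral_mul_le hab.le hf hf01⟩⟩

theorem stmt11 (a b : ℝ) (hab : a < b) (f g : ℝ → ℝ)
    (hf_meas : AEMeasurable f (volume.restrict (Set.Icc a b)))
    (hg_meas : AEMeasurable g (volume.restrict (Set.Icc a b)))
    (hf_nonneg : ∀ x ∈ Set.Icc a b, 0 ≤ f x)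
    (hg_nonneg : ∀ x ∈ Set.Icc a b, 0 ≤ g x)
    (hg_bdd : ∃ M : ℝ, ∀ x ∈ Set.Icc a b, g x ≤ M)
    (hf_le_one : ∀ᵐ x ∂volume.restrict (Set.Icc a b), f x ≤ 1) :
    (AntitoneOn g (Set.Icc a b) →
      (∫ x in (b - ∫ x in a..b, |f x|)..b, g x) ≤ (∫ x in a..b, f x * g x) ∧
      (∫ x in a..b, f x * g x) ≤ ∫ x in a..(a + ∫ x in a..b, |f x|), g x) ∧
    (MonotoneOn g (Set.Icc a b) →
      (∫ x in a..(a + ∫ x in a..b, |f x|), g x) ≤ (∫ x in a..b, f x * g x) ∧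
      (∫ x in a..b, f x * g x) ≤ ∫ x in (b - ∫ x in a..b, |f x|)..b, g x) :=
  stmt11_general a b hab f g hf_meas hf_nonneg hf_le_one
end

section
/- Let a < b and let f, g: [a, b] → ℝ be nonnegative, measurable, bounded functions with ‖f‖_{L∞} ≤ 1. Then inf_J ∫_J g ≤ ∫_{[a,b]} f·g ≤ sup_J ∫_J g, where the infimum and supremum are taken over all measurable subsets J ⊆ [a, b] of Lebesgue measure |J| = ‖f‖_{L¹}. -/
/-!
Bathtub principle. With `m = ∫ f`, pick a level `t` with `|{g > t}| ≤ m ≤ |{g ≥ t}|` and, since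
Lebesgue measure has no atoms, a set `J` with `{g > t} ⊆ J ⊆ {g ≥ t}` and `|J| = m`. As
`0 ≤ f ≤ 1`, `(f - 𝟙_J) (g - t) ≤ 0` pointwise, and `∫ (f - 𝟙_J) = 0`, so `∫ f g ≤ ∫_J g`.
Replacing `g` by `-g` gives the lower bound.
-/

open MeasureTheory Set Filter Topology
open scoped ENNReal

theorem lipschitzWith_volume_real_inter_Iic {A : Set ℝ} (hA : volume A ≠ ∞) :
    LipschitzWith 1 fun s => volume.real (A ∩ Iic s) := by
  refine LipschitzWith.of_le_add fun x y => ?_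
  have hsub : A ∩ Iic x ⊆ A ∩ Iic y ∪ Ioc y x := fun z hz =>
    (le_or_gt z y).imp (fun hzy => ⟨hz.1, hzy⟩) fun hyz => ⟨hyz, hz.2⟩
  calc volume.real (A ∩ Iic x) ≤ volume.real (A ∩ Iic y ∪ Ioc y x) :=
        measureReal_mono hsub (measure_union_ne_top
          (measure_ne_top_of_subset inter_subset_left hA) measure_Ioc_lt_top.ne)
    _ ≤ volume.real (A ∩ Iic y) + volume.real (Ioc y x) := measureReal_union_le _ _
    _ ≤ volume.real (A ∩ Iic y) + dist x y := by
        rw [Real.volume_real_Ioc, Real.dist_eq]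
        gcongr
        exact max_le (le_abs_self _) (abs_nonneg _)

theorem exists_subset_volume_eq {A : Set ℝ} (hA : MeasurableSet A) (hA_fin : volume A ≠ ∞)
    {r : ℝ≥0∞} (hr : r ≤ volume A) : ∃ E ⊆ A, MeasurableSet E ∧ volume E = r := by
  obtain rfl | hr0 := eq_or_ne r 0
  · exact ⟨∅, empty_subset _, .empty, measure_empty⟩
  obtain rfl | hrA := hr.eq_or_lt
  · exact ⟨A, subset_rfl, hA, rfl⟩
  have hfin : ∀ s, volume (A ∩ Iic s) ≠ ∞ := fun s =>
    measure_ne_top_of_subset inter_subset_left hA_fin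
  have hmono : Monotone fun s => A ∩ Iic s := monotone_const.inter monotone_Iic
  have h_top : Tendsto (fun s => volume.real (A ∩ Iic s)) atTop (𝓝 (volume.real A)) := by
    have := tendsto_measure_iUnion_atTop (μ := volume) hmono
    rw [← inter_iUnion, iUnion_Iic, inter_univ] at this
    exact (ENNReal.tendsto_toReal hA_fin).comp this
  have h_bot : Tendsto (fun s => volume.real (A ∩ Iic s)) atBot (𝓝 0) := by
    have := tendsto_measure_iInter_atBot (μ := volume)
      (fun s => (hA.inter measurableSet_Iic).nullMeasurableSet) hmono ⟨0, hfin 0⟩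
    rw [← inter_iInter, iInter_Iic_eq_empty_iff.2 (by simp), inter_empty, measure_empty] at this
    exact (ENNReal.tendsto_toReal ENNReal.zero_ne_top).comp this
  have hr_top : r ≠ ∞ := (hrA.trans_le le_top).ne
  obtain ⟨s, hs⟩ : r.toReal ∈ range fun s => volume.real (A ∩ Iic s) :=
    mem_range_of_exists_le_of_exists_ge (lipschitzWith_volume_real_inter_Iic hA_fin).continuous
      (h_bot.eventually (eventually_le_nhds (ENNReal.toReal_pos hr0 hr_top))).exists
      (h_top.eventually
        (eventually_ge_nhds ((ENNReal.toReal_lt_toReal hr_top hA_fin).2 hrA))).exists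
  exact ⟨A ∩ Iic s, inter_subset_left, hA.inter measurableSet_Iic,
    (ENNReal.toReal_eq_toReal_iff' (hfin s) hr_top).1 hs⟩

section FiniteMeasure

variable {α : Type*} [MeasurableSpace α] {μ : Measure α}

theorem exists_measure_lt_le_le_measure_le [IsFiniteMeasure μ] {g : α → ℝ} {C : ℝ} {m : ℝ≥0∞}
    (hg : AEMeasurable g μ) (hgC : ∀ᵐ x ∂μ, |g x| ≤ C) (hm : m ≤ μ univ) :
    ∃ t, μ {x | t < g x} ≤ m ∧ m ≤ μ {x | t ≤ g x} := by
  -- `-C ≤ t` keeps `S` bounded below also when `m = μ univ`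
  set S := {t | -C ≤ t ∧ μ {x | t < g x} ≤ m}
  have hS : |C| ∈ S := by
    refine ⟨neg_le_abs C, le_of_eq_of_le (measure_eq_zero_iff_ae_notMem.2 ?_) bot_le⟩
    exact hgC.mono fun x hx => not_lt.2 ((le_abs_self _).trans (hx.trans (le_abs_self C)))
  have hS_bdd : BddBelow S := ⟨-C, fun t ht => ht.1⟩
  refine ⟨sInf S, ?_, ?_⟩
  · obtain ⟨u, hu_anti, hu_gt, hu_lim⟩ := exists_seq_strictAnti_tendsto (sInf S)
    have hunion : {x | sInf S < g x} = ⋃ n, {x | u n < g x} := by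
      ext x
      simp only [mem_iUnion]
      exact ⟨fun hx => (hu_lim.eventually (eventually_lt_nhds hx)).exists,
        fun ⟨n, hn⟩ => (hu_gt n).trans hn⟩
    have hmono : Monotone fun n => {x | u n < g x} := fun i j hij x hx =>
      (hu_anti.antitone hij).trans_lt hx
    rw [hunion, hmono.measure_iUnion]
    refine iSup_le fun n => ?_
    obtain ⟨s, hsS, hsu⟩ := exists_lt_of_csInf_lt ⟨_, hS⟩ (hu_gt n)
    exact (measure_mono fun x hx => hsu.trans hx).trans hsS.2
  · obtain ⟨u, hu_mono, hu_lt, hu_lim⟩ := exists_seq_strictMono_tendsto (sInf S)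
    have hinter : {x | sInf S ≤ g x} = ⋂ n, {x | u n < g x} := by
      ext x
      simp only [mem_iInter]
      exact ⟨fun hx n => (hu_lt n).trans_le hx,
        fun hx => le_of_tendsto' hu_lim fun n => (hx n).le⟩
    have hanti : Antitone fun n => {x | u n < g x} := fun i j hij x hx =>
      (hu_mono.monotone hij).trans_lt hx
    rw [hinter, hanti.measure_iInter (fun n => nullMeasurableSet_lt aemeasurable_const hg)
      ⟨0, measure_ne_top μ _⟩]
    refine le_iInf fun n => ?_
    by_cases hn : -C ≤ u n
    · have := notMem_of_lt_csInf (hu_lt n) hS_bdd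
      simp only [S, mem_ofPred_eq, not_and, not_le] at this
      exact (this hn).le
    · refine hm.trans (measure_mono_ae (hgC.mono fun x hx _ => ?_))
      show u n < g x
      linarith [neg_abs_le (g x)]

theorem integral_mul_le_setIntegral_of_ae_le_of_ae_ge [IsFiniteMeasure μ] {f g : α → ℝ}
    {J : Set α} {t : ℝ} (hJ : MeasurableSet J) (hf : AEMeasurable f μ)
    (hf01 : ∀ᵐ x ∂μ, f x ∈ Icc 0 1) (hg : Integrable g μ) (hJf : μ.real J = ∫ x, f x ∂μ)
    (hg_in : ∀ᵐ x ∂μ, x ∈ J → t ≤ g x) (hg_out : ∀ᵐ x ∂μ, x ∉ J → g x ≤ t) :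
    ∫ x, f x * g x ∂μ ≤ ∫ x in J, g x ∂μ := by
  have hf_int : Integrable f μ := .of_mem_Icc 0 1 hf hf01
  have hfg_int : Integrable (fun x => f x * g x) μ :=
    hg.bdd_mul hf.aestronglyMeasurable (c := 1) (hf01.mono fun x hx => by
      rw [Real.norm_eq_abs, abs_of_nonneg hx.1]
      exact hx.2)
  -- `(f - 𝟙_J) * g ≤ (f - 𝟙_J) * t`, expanded so that each term is integrable
  have hpt : ∀ᵐ x ∂μ, f x * g x - J.indicator g x ≤ t * f x - J.indicator (fun _ => t) x := by
    filter_upwards [hf01, hg_in, hg_out] with x hfx hin hout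
    by_cases hx : x ∈ J
    · simp only [indicator_of_mem hx]
      nlinarith [mul_nonneg (sub_nonneg.2 hfx.2) (sub_nonneg.2 (hin hx))]
    · simp only [indicator_of_notMem hx]
      nlinarith [mul_nonneg hfx.1 (sub_nonneg.2 (hout hx))]
  have key : ∫ x, (f x * g x - J.indicator g x) ∂μ ≤
      ∫ x, (t * f x - J.indicator (fun _ => t) x) ∂μ :=
    integral_mono_ae (hfg_int.sub (hg.indicator hJ))
      ((hf_int.const_mul t).sub ((integrable_const t).indicator hJ)) hpt
  rw [integral_sub hfg_int (hg.indicator hJ), integral_indicator hJ,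
    integral_sub (hf_int.const_mul t) ((integrable_const t).indicator hJ), integral_const_mul,
    integral_indicator_const _ hJ, hJf, smul_eq_mul, mul_comm, sub_self] at key
  linarith

end FiniteMeasure

theorem exists_superlevel_subset_volume_eq {s : Set ℝ} (hs : MeasurableSet s)
    (hs_fin : volume s ≠ ∞) {g : ℝ → ℝ} {C : ℝ} (hg : AEMeasurable g (volume.restrict s))
    (hgC : ∀ᵐ x ∂volume.restrict s, |g x| ≤ C) {m : ℝ≥0∞} (hm : m ≤ volume s) :
    ∃ J ⊆ s, MeasurableSet J ∧ volume J = m ∧ ∃ t,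
      (∀ᵐ x ∂volume.restrict s, x ∈ J → t ≤ g x) ∧
      (∀ᵐ x ∂volume.restrict s, x ∉ J → g x ≤ t) := by
  have := isFiniteMeasure_restrict.2 hs_fin
  set g' := hg.mk g
  have hg' : Measurable g' := hg.measurable_mk
  have hgg' : g =ᵐ[volume.restrict s] g' := hg.ae_eq_mk
  have hg'C : ∀ᵐ x ∂volume.restrict s, |g' x| ≤ C := by
    filter_upwards [hgC, hgg'] with x hx hxg
    rwa [← hxg]
  obtain ⟨t, hlt, hle⟩ := exists_measure_lt_le_le_measure_le (m := m) hg'.aemeasurable hg'C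
    (by rwa [Measure.restrict_apply_univ])
  rw [Measure.restrict_apply (measurableSet_lt measurable_const hg')] at hlt
  rw [Measure.restrict_apply (measurableSet_le measurable_const hg')] at hle
  set A := {x | t < g' x} ∩ s
  set D := {x | g' x = t} ∩ s
  have hA : MeasurableSet A := (measurableSet_lt measurable_const hg').inter hs
  have hD : MeasurableSet D := (measurableSet_eq_fun hg' measurable_const).inter hs
  have hAD : {x | t ≤ g' x} ∩ s = A ∪ D := by
    rw [← union_inter_distrib_right]
    congr 1
    ext x
    simp only [mem_union, mem_ofPred_eq, le_iff_lt_or_eq, eq_comm]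
  obtain ⟨E, hED, hE, hEvol⟩ := exists_subset_volume_eq hD
    (measure_ne_top_of_subset inter_subset_right hs_fin) (r := m - volume A)
    (tsub_le_iff_left.2 ((hle.trans_eq (congrArg volume hAD)).trans (measure_union_le A D)))
  have hAE : Disjoint A E := disjoint_left.2 fun x hxA hxE => (hED hxE).1.not_gt hxA.1
  refine ⟨A ∪ E, union_subset inter_subset_right (hED.trans inter_subset_right), hA.union hE,
    ?_, t, ?_, ?_⟩
  · rw [measure_union hAE hE, hEvol, add_tsub_cancel_of_le hlt]
  · filter_upwards [hgg'] with x hx hxJ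
    rw [hx]
    rcases hxJ with hxA | hxE
    exacts [hxA.1.le, (hED hxE).1.ge]
  · filter_upwards [hgg', ae_restrict_mem hs] with x hx hxs hxJ
    rw [hx]
    exact not_lt.1 fun h => hxJ (Or.inl ⟨h, hxs⟩)

theorem exists_subset_volume_eq_integral_mul_le_setIntegral {s : Set ℝ} (hs : MeasurableSet s)
    (hs_fin : volume s ≠ ∞) {f g : ℝ → ℝ} {C : ℝ} (hf : AEMeasurable f (volume.restrict s))
    (hg : AEMeasurable g (volume.restrict s)) (hf01 : ∀ᵐ x ∂volume.restrict s, f x ∈ Icc 0 1)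
    (hgC : ∀ᵐ x ∂volume.restrict s, |g x| ≤ C) :
    ∃ J ⊆ s, MeasurableSet J ∧ volume J = ENNReal.ofReal (∫ x in s, f x) ∧
      ∫ x in s, f x * g x ≤ ∫ x in J, g x := by
  have := isFiniteMeasure_restrict.2 hs_fin
  have hf_int : ∫ x in s, f x ≤ volume.real s := by
    calc ∫ x in s, f x ≤ ∫ _ in s, (1 : ℝ) := integral_mono_ae (.of_mem_Icc 0 1 hf hf01)
          (integrable_const 1) (hf01.mono fun x hx => hx.2)
      _ = volume.real s := by simp
  obtain ⟨J, hJs, hJ, hJvol, t, hin, hout⟩ :=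
    exists_superlevel_subset_volume_eq hs hs_fin hg hgC (ENNReal.ofReal_le_of_le_toReal hf_int)
  refine ⟨J, hJs, hJ, hJvol, ?_⟩
  have hJf : (volume.restrict s).real J = ∫ x in s, f x := by
    rw [measureReal_restrict_apply hJ, inter_eq_self_of_subset_left hJs, measureReal_def, hJvol,
      ENNReal.toReal_ofReal (integral_nonneg_of_ae (hf01.mono fun x hx => hx.1))]
  have := integral_mul_le_setIntegral_of_ae_le_of_ae_ge hJ hf hf01
    (.of_mem_Icc (-C) C hg (hgC.mono fun x hx => abs_le.1 hx)) hJf hin hout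
  rwa [Measure.restrict_restrict hJ, inter_eq_self_of_subset_left hJs] at this

theorem exists_subset_volume_eq_setIntegral_le_integral_mul {s : Set ℝ} (hs : MeasurableSet s)
    (hs_fin : volume s ≠ ∞) {f g : ℝ → ℝ} {C : ℝ} (hf : AEMeasurable f (volume.restrict s))
    (hg : AEMeasurable g (volume.restrict s)) (hf01 : ∀ᵐ x ∂volume.restrict s, f x ∈ Icc 0 1)
    (hgC : ∀ᵐ x ∂volume.restrict s, |g x| ≤ C) :
    ∃ J ⊆ s, MeasurableSet J ∧ volume J = ENNReal.ofReal (∫ x in s, f x) ∧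
      ∫ x in J, g x ≤ ∫ x in s, f x * g x := by
  obtain ⟨J, hJs, hJ, hJvol, hle⟩ := exists_subset_volume_eq_integral_mul_le_setIntegral hs hs_fin
    hf hg.neg hf01 (g := fun x => -g x) (by simpa only [abs_neg] using hgC)
  refine ⟨J, hJs, hJ, hJvol, ?_⟩
  simpa only [mul_neg, integral_neg, neg_le_neg_iff] using hle

theorem stmt12 (a b : ℝ) (hab : a < b) (f g : ℝ → ℝ)
    (hf_meas : AEMeasurable f (volume.restrict (Set.Icc a b)))
    (hg_meas : AEMeasurable g (volume.restrict (Set.Icc a b)))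
    (hf_nonneg : ∀ x ∈ Set.Icc a b, 0 ≤ f x)
    (hg_nonneg : ∀ x ∈ Set.Icc a b, 0 ≤ g x)
    (hg_bdd : ∃ M : ℝ, ∀ x ∈ Set.Icc a b, g x ≤ M)
    (hf_le_one : ∀ᵐ x ∂volume.restrict (Set.Icc a b), f x ≤ 1) :
    sInf {v : ℝ | ∃ J : Set ℝ, J ⊆ Set.Icc a b ∧ MeasurableSet J ∧
        volume J = ENNReal.ofReal (∫ x in a..b, |f x|) ∧ v = ∫ x in J, g x} ≤
      (∫ x in Set.Icc a b, f x * g x) ∧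
    (∫ x in Set.Icc a b, f x * g x) ≤
      sSup {v : ℝ | ∃ J : Set ℝ, J ⊆ Set.Icc a b ∧ MeasurableSet J ∧
        volume J = ENNReal.ofReal (∫ x in a..b, |f x|) ∧ v = ∫ x in J, g x} := by
  obtain ⟨M, hM⟩ := hg_bdd
  have hf01 : ∀ᵐ x ∂volume.restrict (Icc a b), f x ∈ Icc 0 1 := by
    filter_upwards [hf_le_one, ae_restrict_mem measurableSet_Icc] with x hx1 hx
    exact ⟨hf_nonneg x hx, hx1⟩
  have hgM : ∀ᵐ x ∂volume.restrict (Icc a b), |g x| ≤ M := by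
    filter_upwards [ae_restrict_mem measurableSet_Icc] with x hx
    rw [abs_of_nonneg (hg_nonneg x hx)]
    exact hM x hx
  have hL1 : ∫ x in a..b, |f x| = ∫ x in Icc a b, f x := by
    rw [intervalIntegral.integral_of_le hab.le, ← integral_Icc_eq_integral_Ioc]
    exact integral_congr_ae (hf01.mono fun x hx => abs_of_nonneg hx.1)
  have hg_int : IntegrableOn g (Icc a b) :=
    .of_mem_Icc (-M) M hg_meas (hgM.mono fun x hx => abs_le.1 hx)
  set V := {v : ℝ | ∃ J : Set ℝ, J ⊆ Icc a b ∧ MeasurableSet J ∧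
    volume J = ENNReal.ofReal (∫ x in a..b, |f x|) ∧ v = ∫ x in J, g x}
  have hV : V ⊆ Icc 0 (∫ x in Icc a b, g x) := by
    rintro _ ⟨J, hJs, hJ, -, rfl⟩
    exact ⟨setIntegral_nonneg hJ fun x hx => hg_nonneg x (hJs hx),
      setIntegral_mono_set hg_int ((ae_restrict_mem measurableSet_Icc).mono hg_nonneg)
        hJs.eventuallyLE⟩
  obtain ⟨J₁, hJ₁s, hJ₁, hJ₁vol, hle₁⟩ := exists_subset_volume_eq_setIntegral_le_integral_mul
    measurableSet_Icc measure_Icc_lt_top.ne hf_meas hg_meas hf01 hgM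
  obtain ⟨J₂, hJ₂s, hJ₂, hJ₂vol, hle₂⟩ := exists_subset_volume_eq_integral_mul_le_setIntegral
    measurableSet_Icc measure_Icc_lt_top.ne hf_meas hg_meas hf01 hgM
  exact ⟨csInf_le_of_le (bddBelow_Icc.mono hV) ⟨J₁, hJ₁s, hJ₁, hL1 ▸ hJ₁vol, rfl⟩ hle₁,
    le_csSup_of_le (bddAbove_Icc.mono hV) ⟨J₂, hJ₂s, hJ₂, hL1 ▸ hJ₂vol, rfl⟩ hle₂⟩
end

section
/- Let f: ℝ → ℝ be a function in L¹(ℝ) ∩ L²(ℝ) with ‖f‖_{L¹} = 1, real-valued, satisfying f(0) = 0 and f = f̂ (so in particular f is even and ∫_ℝ f = 0). Then A(f) ≥ 1/4. -/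
/-!
Self-duality gives `‖f‖_∞ = ‖f̂‖_∞ ≤ ‖f‖₁ = 1` and `∫ f = f̂ 0 = f 0 = 0`, so the negative part
`f⁻ = (|f| - f) / 2` has integral `1/2`. If `f ≥ 0` outside `[-r, r]`, then `f⁻` lives on
`[-r, r]` and is bounded by `1`, whence `1/2 ≤ 2r`.
-/

open MeasureTheory Real
open scoped FourierTransform

/-- `A(g)`: the infimum of all `r > 0` such that `g x ≥ 0` for all `|x| > r`,
with the convention that the infimum of the empty set is `+∞`. -/
noncomputable def sgnRadius (g : ℝ → ℝ) : ENNReal :=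
  sInf (ENNReal.ofReal '' {r : ℝ | 0 < r ∧ ∀ x : ℝ, r < |x| → 0 ≤ g x})

namespace Real

variable {V E : Type*} [NormedAddCommGroup V] [InnerProductSpace ℝ V] [MeasurableSpace V]
  [BorelSpace V] [FiniteDimensional ℝ V] [NormedAddCommGroup E] [NormedSpace ℂ E]

theorem norm_fourier_le_integral_norm (f : V → E) (w : V) : ‖𝓕 f w‖ ≤ ∫ v, ‖f v‖ :=
  VectorFourier.norm_fourierIntegral_le_integral_norm _ _ _ _ _

theorem fourier_apply_zero (f : V → E) : 𝓕 f 0 = ∫ v, f v := by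
  simp [fourier_eq]

end Real

theorem integral_negPart_eq {X : Type*} [MeasurableSpace X] {μ : Measure X} {f : X → ℝ}
    (hf : Integrable f μ) : ∫ x, (f x)⁻ ∂μ = ((∫ x, |f x| ∂μ) - ∫ x, f x ∂μ) / 2 := by
  rw [← integral_sub hf.abs hf, ← integral_div]
  congr 1 with x
  rw [abs_sub_eq_two_nsmul_negPart]
  ring

theorem norm_integral_le_of_support_subset_Icc {E : Type*} [NormedAddCommGroup E]
    [NormedSpace ℝ E] {g : ℝ → E} {r C : ℝ} (hr : 0 ≤ r)
    (hg : Function.support g ⊆ Set.Icc (-r) r) (hC : ∀ x ∈ Set.Icc (-r) r, ‖g x‖ ≤ C) :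
    ‖∫ x, g x‖ ≤ C * (2 * r) := by
  rw [← setIntegral_eq_integral_of_forall_compl_eq_zero fun x hx ↦
    Function.notMem_support.mp fun h ↦ hx (hg h)]
  convert norm_setIntegral_le_of_norm_le_const (isCompact_Icc.measure_lt_top (μ := volume)) hC
    using 2
  rw [volume_real_Icc_of_le (by linarith)]
  ring

theorem ofReal_le_sgnRadius {g : ℝ → ℝ} {c : ℝ}
    (h : ∀ r, 0 < r → (∀ x, r < |x| → 0 ≤ g x) → c ≤ r) : ENNReal.ofReal c ≤ sgnRadius g := by
  refine le_sInf ?_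
  rintro _ ⟨r, ⟨hr, hg⟩, rfl⟩
  exact ENNReal.ofReal_le_ofReal (h r hr hg)

section SelfDual

variable {f : ℝ → ℝ} (hself : ∀ x : ℝ, 𝓕 (fun t : ℝ => (f t : ℂ)) x = (f x : ℂ))
include hself

theorem abs_le_integral_abs_of_fourier_eq_self (x : ℝ) : |f x| ≤ ∫ t, |f t| := by
  simpa [hself x] using norm_fourier_le_integral_norm (fun t : ℝ => (f t : ℂ)) x

theorem integral_eq_apply_zero_of_fourier_eq_self : ∫ t, f t = f 0 := by
  have h := (fourier_apply_zero (fun t : ℝ => (f t : ℂ))).symm.trans (hself 0)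
  rwa [integral_complex_ofReal, Complex.ofReal_inj] at h

end SelfDual

theorem stmt13_general (f : ℝ → ℝ) (hint : Integrable f)
    (hnorm : ∫ x : ℝ, |f x| = 1) (hf0 : f 0 = 0)
    (hself : ∀ x : ℝ, 𝓕 (fun t : ℝ => (f t : ℂ)) x = (f x : ℂ)) :
    ENNReal.ofReal (1 / 4) ≤ sgnRadius f := by
  have hbound (x : ℝ) : |f x| ≤ 1 := hnorm ▸ abs_le_integral_abs_of_fourier_eq_self hself x
  have hneg : ∫ x, (f x)⁻ = 1 / 2 := by
    rw [integral_negPart_eq hint, hnorm, integral_eq_apply_zero_of_fourier_eq_self hself, hf0]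
    norm_num
  refine ofReal_le_sgnRadius fun r hr hpos ↦ ?_
  have hsupp : Function.support (fun x ↦ (f x)⁻) ⊆ Set.Icc (-r) r := fun x hx ↦ by
    by_contra hout
    exact hx (negPart_eq_zero.mpr (hpos x (lt_of_not_ge fun h ↦ hout (abs_le.mp h))))
  have hle := norm_integral_le_of_support_subset_Icc (C := 1) hr.le hsupp fun x _ ↦ by
    rw [norm_of_nonneg (negPart_nonneg _)]
    exact (sup_le (neg_le_abs _) (abs_nonneg _)).trans (hbound x)
  rw [hneg, norm_of_nonneg (by norm_num)] at hle
  linarith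

theorem stmt13 (f : ℝ → ℝ) (hint : Integrable f) (hL2 : MemLp f 2 volume)
    (hnorm : ∫ x : ℝ, |f x| = 1) (hf0 : f 0 = 0)
    (hself : ∀ x : ℝ, 𝓕 (fun t : ℝ => (f t : ℂ)) x = (f x : ℂ)) :
    ENNReal.ofReal (1 / 4) ≤ sgnRadius f :=
  stmt13_general f hint hnorm hf0 hself
end

section
/- Let f: ℝ → ℝ be admissible, i.e. f ∈ L¹(ℝ) ∩ L²(ℝ), ‖f‖_{L¹} = 1, f is even and real-valued, f(0) = 0, and f = f̂. Then for every A > 0, ∫₀^A f(x) dx = ∫_{−∞}^{∞} f(y)·( sin(2πAy)/(2πy) + (13/400)·(8πy² − 2)·e^{−πy²} ) dy. -/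
/-!
For an integrable `u` with `𝓕 u = u`, the multiplication formula `∫ 𝓕 u · φ = ∫ u · 𝓕 φ`
becomes `∫ u · 𝓕 φ = ∫ u · φ` for every integrable `φ`. For `φ` the indicator of `(0, A]`,
the real part of `𝓕 φ (y)` is `sin (2πAy) / (2πy)` (away from `y = 0`), which gives the
sine-kernel term. The Gaussian term is a multiple of the second Hermite function `h`, for
which `𝓕 h = -h`; hence `∫ f h = ∫ f · 𝓕 h = -∫ f h` vanishes.
-/

open MeasureTheory Real
open scoped FourierTransform

section InnerProductSpace

variable {V : Type*} [NormedAddCommGroup V] [InnerProductSpace ℝ V] [MeasurableSpace V]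
  [BorelSpace V] [FiniteDimensional ℝ V]

theorem fourier_const_smul (c : ℂ) (u : V → ℂ) : 𝓕 (c • u) = c • 𝓕 u :=
  VectorFourier.fourierIntegral_const_smul _ _ _ u c

theorem fourier_add_of_integrable {u v : V → ℂ} (hu : Integrable u) (hv : Integrable v) :
    𝓕 (u + v) = 𝓕 u + 𝓕 v :=
  VectorFourier.fourierIntegral_add continuous_fourierChar continuous_inner hu hv

theorem integral_fourier_mul_eq {u φ : V → ℂ} (hu : Integrable u) (hφ : Integrable φ) :
    ∫ ξ, 𝓕 u ξ * φ ξ = ∫ x, u x * 𝓕 φ x := by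
  simpa using! VectorFourier.integral_bilin_fourierIntegral_eq_flip (.mul ℂ ℂ) (L := innerₗ V)
    continuous_fourierChar continuous_inner hu hφ

theorem integrable_mul_fourier {u φ : V → ℂ} (hu : Integrable u) (hφ : Integrable φ) :
    Integrable fun x ↦ u x * 𝓕 φ x :=
  hu.mul_bdd (VectorFourier.fourierIntegral_continuous continuous_fourierChar continuous_inner
    hφ).aestronglyMeasurable
    (.of_forall fun _ ↦ VectorFourier.norm_fourierIntegral_le_integral_norm _ _ _ _ _)

theorem integrable_mul_re_fourier {f : V → ℝ} {φ : V → ℂ} (hf : Integrable f)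
    (hφ : Integrable φ) : Integrable fun x ↦ f x * (𝓕 φ x).re := by
  simpa using (integrable_mul_fourier hf.ofReal hφ).re

theorem integral_mul_re_fourier_of_fourier_eq_self {f : V → ℝ} {φ : V → ℂ} (hf : Integrable f)
    (hf_self : 𝓕 (fun x ↦ (f x : ℂ)) = fun x ↦ (f x : ℂ)) (hφ : Integrable φ) :
    ∫ x, f x * (𝓕 φ x).re = (∫ x, (f x : ℂ) * φ x).re := by
  calc ∫ x, f x * (𝓕 φ x).re = ∫ x, ((f x : ℂ) * 𝓕 φ x).re := by simp
    _ = (∫ x, (f x : ℂ) * 𝓕 φ x).re := integral_re (integrable_mul_fourier hf.ofReal hφ)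
    _ = (∫ x, (f x : ℂ) * φ x).re := by
      simpa [hf_self] using congrArg Complex.re (integral_fourier_mul_eq hf.ofReal hφ).symm

end InnerProductSpace

theorem re_fourier_indicator_Ioc {a b : ℝ} (hab : a ≤ b) {x : ℝ} (hx : x ≠ 0) :
    (𝓕 ((Set.Ioc a b).indicator (1 : ℝ → ℂ)) x).re =
      (sin (2 * π * b * x) - sin (2 * π * a * x)) / (2 * π * x) := by
  have hc : 2 * π * x ≠ 0 := by positivity
  have hint : IntegrableOn (fun v : ℝ ↦ Complex.exp (↑(-2 * π * v * x) * Complex.I))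
      (Set.Ioc a b) :=
    Continuous.integrableOn_Ioc (by fun_prop)
  calc (𝓕 ((Set.Ioc a b).indicator (1 : ℝ → ℂ)) x).re
      = (∫ v in Set.Ioc a b, Complex.exp (↑(-2 * π * v * x) * Complex.I)).re := by
        rw [fourier_real_eq_integral_exp_smul, ← integral_indicator measurableSet_Ioc]
        congr 2 with v
        by_cases hv : v ∈ Set.Ioc a b <;> simp [hv]
    _ = ∫ v in Set.Ioc a b, (Complex.exp (↑(-2 * π * v * x) * Complex.I)).re :=
        (integral_re hint).symm
    _ = ∫ v in a..b, cos (2 * π * x * v) := by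
        rw [intervalIntegral.integral_of_le hab]
        congr 1 with v
        rw [Complex.exp_ofReal_mul_I_re, ← cos_neg]
        ring_nf
    _ = (sin (2 * π * b * x) - sin (2 * π * a * x)) / (2 * π * x) := by
        rw [intervalIntegral.integral_comp_mul_left (fun v ↦ cos v) hc, integral_cos, smul_eq_mul,
          inv_mul_eq_div, mul_right_comm (2 * π) x b, mul_right_comm (2 * π) x a]

section Gaussian

open Complex

theorem integrable_pow_smul_cexp_neg_pi_mul_sq (n : ℕ) :
    Integrable fun x : ℝ ↦ x ^ n • cexp (-π * x ^ 2) := by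
  refine (integrable_rpow_mul_exp_neg_mul_sq pi_pos (s := n)
    (by linarith [n.cast_nonneg (α := ℝ)])).ofReal.congr (.of_forall fun x ↦ ?_)
  simp [Complex.real_smul, Complex.ofReal_exp]

theorem integrable_sq_mul_cexp_neg_pi_mul_sq :
    Integrable fun x : ℝ ↦ (x : ℂ) ^ 2 * cexp (-π * x ^ 2) := by
  simpa [Complex.real_smul] using integrable_pow_smul_cexp_neg_pi_mul_sq 2

theorem hasDerivAt_cexp_neg_pi_mul_sq (x : ℝ) :
    HasDerivAt (fun x : ℝ ↦ cexp (-π * x ^ 2)) (-2 * π * x * cexp (-π * x ^ 2)) x := by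
  convert ((hasDerivAt_pow 2 (x : ℂ)).const_mul (-(π : ℂ))).cexp.comp_ofReal using 1
  ring

theorem iteratedDeriv_two_cexp_neg_pi_mul_sq :
    iteratedDeriv 2 (fun x : ℝ ↦ cexp (-π * x ^ 2)) =
      fun x : ℝ ↦ (4 * π ^ 2 * x ^ 2 - 2 * π) * cexp (-π * x ^ 2) := by
  rw [iteratedDeriv_succ, iteratedDeriv_one]
  funext x
  have hlin : HasDerivAt (fun x : ℝ ↦ -2 * π * (x : ℂ)) (-2 * π) x := by
    simpa using ((hasDerivAt_id (x : ℂ)).const_mul (-2 * (π : ℂ))).comp_ofReal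
  rw [funext fun y ↦ (hasDerivAt_cexp_neg_pi_mul_sq y).deriv,
    (hlin.fun_mul (hasDerivAt_cexp_neg_pi_mul_sq x)).deriv]
  ring

theorem fourier_cexp_neg_pi_mul_sq :
    𝓕 (fun x : ℝ ↦ cexp (-π * x ^ 2)) = fun x : ℝ ↦ cexp (-π * x ^ 2) := by
  simpa using fourier_gaussian_pi (b := 1) (by simp)

theorem fourier_sq_mul_cexp_neg_pi_mul_sq :
    𝓕 (fun x : ℝ ↦ (x : ℂ) ^ 2 * cexp (-π * x ^ 2)) =
      fun ξ : ℝ ↦ (1 / (2 * π) - ξ ^ 2) * cexp (-π * ξ ^ 2) := by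
  have h := Real.iteratedDeriv_fourier (N := 2) (n := 2)
    (fun n _ ↦ integrable_pow_smul_cexp_neg_pi_mul_sq n) le_rfl
  have hsmul : (fun x : ℝ ↦ (-2 * π * I * x) ^ 2 • cexp (-π * x ^ 2)) =
      (-4 * π ^ 2 : ℂ) • fun x : ℝ ↦ (x : ℂ) ^ 2 * cexp (-π * x ^ 2) := by
    funext x
    simp only [smul_eq_mul, Pi.smul_apply]
    linear_combination (4 * π ^ 2 * x ^ 2 * cexp (-π * x ^ 2)) * I_sq
  rw [fourier_cexp_neg_pi_mul_sq, iteratedDeriv_two_cexp_neg_pi_mul_sq, hsmul,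
    fourier_const_smul] at h
  funext ξ
  have hξ := congrFun h ξ
  simp only [Pi.smul_apply, smul_eq_mul] at hξ
  generalize 𝓕 (fun x : ℝ ↦ (x : ℂ) ^ 2 * cexp (-π * x ^ 2)) ξ = F at hξ ⊢
  have hπ : (π : ℂ) ≠ 0 := ofReal_ne_zero.mpr pi_ne_zero
  rw [← mul_right_inj' (by simp [hπ] : (-4 * π ^ 2 : ℂ) ≠ 0), ← hξ]
  field_simp
  ring

end Gaussian

/-- `H₂(√(2π) x) e^{-πx²}` with `H₂(t) = 4t² - 2` the second Hermite polynomial: an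
eigenfunction of `𝓕` with eigenvalue `(-i)² = -1`. -/
noncomputable def secondHermiteFunction (x : ℝ) : ℝ := (8 * π * x ^ 2 - 2) * exp (-π * x ^ 2)

open Complex in
theorem ofReal_secondHermiteFunction :
    (fun x ↦ (secondHermiteFunction x : ℂ)) =
      (8 * π : ℂ) • (fun x : ℝ ↦ (x : ℂ) ^ 2 * cexp (-π * x ^ 2)) +
        (-2 : ℂ) • fun x : ℝ ↦ cexp (-π * x ^ 2) := by
  funext x
  simp only [secondHermiteFunction, Pi.add_apply, Pi.smul_apply, smul_eq_mul]
  push_cast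
  ring

theorem integrable_ofReal_secondHermiteFunction :
    Integrable fun x ↦ (secondHermiteFunction x : ℂ) := by
  rw [ofReal_secondHermiteFunction]
  exact (integrable_sq_mul_cexp_neg_pi_mul_sq.smul _).add
    ((integrable_cexp_neg_mul_sq (by simpa using pi_pos)).smul _)

theorem fourier_ofReal_secondHermiteFunction :
    𝓕 (fun x ↦ (secondHermiteFunction x : ℂ)) = fun ξ ↦ -(secondHermiteFunction ξ : ℂ) := by
  rw [ofReal_secondHermiteFunction,
    fourier_add_of_integrable (integrable_sq_mul_cexp_neg_pi_mul_sq.smul _)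
      ((integrable_cexp_neg_mul_sq (by simpa using pi_pos)).smul _),
    fourier_const_smul, fourier_const_smul, fourier_sq_mul_cexp_neg_pi_mul_sq,
    fourier_cexp_neg_pi_mul_sq]
  funext ξ
  simp only [secondHermiteFunction, Pi.add_apply, Pi.smul_apply, smul_eq_mul]
  push_cast
  field_simp
  ring

section

variable {f : ℝ → ℝ}

theorem integrable_mul_secondHermiteFunction (hf : Integrable f) :
    Integrable fun x ↦ f x * secondHermiteFunction x := by
  -- `h = -Re 𝓕 h` is bounded, being a Fourier transform of an integrable function.
  simpa [fourier_ofReal_secondHermiteFunction] using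
    (integrable_mul_re_fourier hf integrable_ofReal_secondHermiteFunction).neg

theorem integral_mul_secondHermiteFunction_eq_zero (hf : Integrable f)
    (hf_self : 𝓕 (fun x ↦ (f x : ℂ)) = fun x ↦ (f x : ℂ)) :
    ∫ x, f x * secondHermiteFunction x = 0 := by
  have h :=
    integral_mul_re_fourier_of_fourier_eq_self hf hf_self integrable_ofReal_secondHermiteFunction
  simp only [fourier_ofReal_secondHermiteFunction, Complex.neg_re, Complex.ofReal_re, mul_neg,
    integral_neg, ← Complex.ofReal_mul, integral_complex_ofReal] at h
  linarith

theorem mul_re_fourier_indicator_Ioc_zero_ae_eq {A : ℝ} (hA : 0 ≤ A) :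
    (fun y ↦ f y * (𝓕 ((Set.Ioc 0 A).indicator (1 : ℝ → ℂ)) y).re) =ᵐ[volume]
      fun y ↦ f y * (sin (2 * π * A * y) / (2 * π * y)) := by
  filter_upwards [Measure.ae_ne volume 0] with y hy
  simp [re_fourier_indicator_Ioc hA hy]

theorem integrable_indicator_Ioc_one (a b : ℝ) :
    Integrable ((Set.Ioc a b).indicator (1 : ℝ → ℂ)) :=
  (integrableOn_const measure_Ioc_lt_top.ne).integrable_indicator measurableSet_Ioc

theorem integrable_mul_sin_div (hf : Integrable f) {A : ℝ} (hA : 0 ≤ A) :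
    Integrable fun y ↦ f y * (sin (2 * π * A * y) / (2 * π * y)) :=
  (integrable_mul_re_fourier hf (integrable_indicator_Ioc_one 0 A)).congr
    (mul_re_fourier_indicator_Ioc_zero_ae_eq hA)

theorem integral_mul_sin_div (hf : Integrable f)
    (hf_self : 𝓕 (fun x ↦ (f x : ℂ)) = fun x ↦ (f x : ℂ)) {A : ℝ} (hA : 0 ≤ A) :
    ∫ y, f y * (sin (2 * π * A * y) / (2 * π * y)) = ∫ x in 0..A, f x := by
  rw [← integral_congr_ae (mul_re_fourier_indicator_Ioc_zero_ae_eq hA),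
    integral_mul_re_fourier_of_fourier_eq_self hf hf_self (integrable_indicator_Ioc_one 0 A),
    intervalIntegral.integral_of_le hA, ← integral_indicator measurableSet_Ioc]
  have hind (x : ℝ) : (f x : ℂ) * (Set.Ioc 0 A).indicator 1 x = (Set.Ioc 0 A).indicator f x := by
    by_cases hx : x ∈ Set.Ioc 0 A <;> simp [hx]
  simp only [hind, integral_complex_ofReal, Complex.ofReal_re]

end

theorem stmt16_general (f : ℝ → ℝ) (hint : Integrable f)
    (hself : ∀ x : ℝ, 𝓕 (fun t : ℝ => (f t : ℂ)) x = (f x : ℂ)) :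
    ∀ A : ℝ, 0 < A →
      (∫ x in (0:ℝ)..A, f x) =
        ∫ y : ℝ, f y * (Real.sin (2 * π * A * y) / (2 * π * y) +
          13 / 400 * (8 * π * y ^ 2 - 2) * Real.exp (-π * y ^ 2)) := by
  intro A hA
  have hf_self := funext hself
  calc ∫ x in (0:ℝ)..A, f x
      = (∫ y, f y * (sin (2 * π * A * y) / (2 * π * y))) +
          13 / 400 * ∫ y, f y * secondHermiteFunction y := by
        rw [integral_mul_sin_div hint hf_self hA.le,
          integral_mul_secondHermiteFunction_eq_zero hint hf_self, mul_zero, add_zero]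
    _ = _ := by
        rw [← integral_const_mul, ← integral_add (integrable_mul_sin_div hint hA.le)
          ((integrable_mul_secondHermiteFunction hint).const_mul _)]
        congr 1 with y
        simp only [secondHermiteFunction]
        ring

theorem stmt16 (f : ℝ → ℝ) (hint : Integrable f) (hL2 : MemLp f 2 volume)
    (hnorm : ∫ x : ℝ, |f x| = 1) (heven : ∀ x, f (-x) = f x) (hf0 : f 0 = 0)
    (hself : ∀ x : ℝ, 𝓕 (fun t : ℝ => (f t : ℂ)) x = (f x : ℂ)) :
    ∀ A : ℝ, 0 < A →
      (∫ x in (0:ℝ)..A, f x) =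
        ∫ y : ℝ, f y * (Real.sin (2 * π * A * y) / (2 * π * y) +
          13 / 400 * (8 * π * y ^ 2 - 2) * Real.exp (-π * y ^ 2)) :=
  stmt16_general f hint hself
end
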